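/- arXiv:2204.05266 — 5 statements merged into one kernel-verified Lean document; each statement's English description precedes it below -/
import Mathlib

section
/- Let x_1, …, x_M ∈ ℝ^k with ∑_{i=1}^M x_i = 0 and ‖x_i‖ ≤ 1 for all i (‖·‖ an arbitrary norm). Then there exists a permutation π of {1,…,M} such that for every r ∈ {1,…,M}, ‖∑_{i=1}^r x_{π(i)}‖ ≤ k. -/
/-!
Grinberg–Sevastyanov. Call `w ∈ [0,1]^A` a balanced weight on a set `A` of `n > k` indices if
`∑ w i = n - k` and `∑ w i • x i = 0`. Then `∑_{i ∈ A} x i = ∑ (1 - w i) • x i`, whose norm is at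
most `∑ (1 - w i) = k`. As `∑ x i = 0`, the constant weight `(M - k) / M` is balanced on all `M`
indices. Given a balanced weight on `A`, shrink it by the factor `(n - 1 - k) / (n - k)`: it then
lies in the polytope `{μ ∈ [0,1]^A | ∑ μ i = n - 1 - k, ∑ μ i • x i = 0}`, cut out by `k + 1`
linear equations, so moving along affine dependences of the `x i` gives a point of it with at most
`k + 1` coordinates in `(0,1)`. Counting shows that some coordinate of that point is `0`; removing
that index leaves a balanced weight on the remaining `n - 1` indices. Peeling indices off the end
in this way orders them so that every prefix of length `> k` has small sum, and prefixes of length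
`≤ k` have norm at most `k` by the triangle inequality.
-/

open Finset Module

section Steinitz

variable {ι E : Type*} [AddCommGroup E] [Module ℝ E]

structure IsBalancedWeight (x : ι → E) (A : Finset ι) (s : ℝ) (w : ι → ℝ) : Prop where
  mem_Icc : ∀ i ∈ A, w i ∈ Set.Icc 0 1
  sum_eq : ∑ i ∈ A, w i = s
  sum_smul_eq_zero : ∑ i ∈ A, w i • x i = 0

noncomputable def fractionalSet (A : Finset ι) (w : ι → ℝ) : Finset ι :=
  {i ∈ A | w i ∈ Set.Ioo 0 1}

lemma mem_fractionalSet {A : Finset ι} {w : ι → ℝ} {i : ι} :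
    i ∈ fractionalSet A w ↔ i ∈ A ∧ w i ∈ Set.Ioo 0 1 :=
  mem_filter

lemma fractionalSet_subset (A : Finset ι) (w : ι → ℝ) : fractionalSet A w ⊆ A :=
  filter_subset _ _

lemma exists_forall_nonneg_add_mul_and_eq_zero {J : Type*} {S : Finset J} {a b : J → ℝ}
    (ha : ∀ j ∈ S, 0 ≤ a j) (hb : ∃ j ∈ S, b j < 0) :
    ∃ t, (∀ j ∈ S, 0 ≤ a j + t * b j) ∧ ∃ j ∈ S, a j + t * b j = 0 := by
  obtain ⟨j₀, hj₀, hmin⟩ := exists_min_image {j ∈ S | b j < 0} (fun j => a j / -b j)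
    (let ⟨j, hj, hbj⟩ := hb; ⟨j, mem_filter.2 ⟨hj, hbj⟩⟩)
  obtain ⟨hj₀S, hbj₀⟩ := mem_filter.1 hj₀
  refine ⟨a j₀ / -b j₀, fun j hj => ?_, j₀, hj₀S, by field_simp [hbj₀.ne]; ring⟩
  rcases lt_or_ge (b j) 0 with hbj | hbj
  · have := hmin j (mem_filter.2 ⟨hj, hbj⟩)
    rw [le_div_iff₀ (neg_pos.2 hbj)] at this
    linarith
  · have : 0 ≤ a j₀ / -b j₀ := div_nonneg (ha _ hj₀S) (by linarith)
    nlinarith [ha j hj]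

lemma exists_nontrivial_affine_relation_of_finrank_succ_lt_card [FiniteDimensional ℝ E]
    (x : ι → E) {F : Finset ι} (hF : finrank ℝ E + 1 < F.card) :
    ∃ c : ι → ℝ, (∀ i ∉ F, c i = 0) ∧ ∑ i ∈ F, c i = 0 ∧ ∑ i ∈ F, c i • x i = 0 ∧
      ∃ i ∈ F, c i ≠ 0 := by
  classical
  have hdep : ¬ LinearIndepOn ℝ (fun i => (x i, (1 : ℝ))) (F : Set ι) := fun h => by
    have := h.fintype_card_le_finrank
    simp only [SetLike.coe_sort_coe, Fintype.card_coe, finrank_prod, finrank_self] at this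
    omega
  obtain ⟨f, hf, i, hi, hfi⟩ := not_linearIndepOn_finset_iff.1 hdep
  refine ⟨fun i => if i ∈ F then f i else 0, fun i hi => if_neg hi, ?_, ?_, i, hi, by simpa [hi]⟩
  · simpa [sum_ite_mem, Prod.snd_sum] using congrArg Prod.snd hf
  · simpa [sum_ite_mem, ite_smul, Prod.fst_sum] using congrArg Prod.fst hf

lemma exists_add_mul_mem_Icc_and_not_mem_Ioo {F : Finset ι} {w c : ι → ℝ}
    (hw : ∀ i ∈ F, w i ∈ Set.Ioo 0 1) (hc : ∃ i ∈ F, c i ≠ 0) :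
    ∃ t, (∀ i ∈ F, w i + t * c i ∈ Set.Icc 0 1) ∧ ∃ i ∈ F, w i + t * c i ∉ Set.Ioo 0 1 := by
  -- each `i ∈ F` contributes the two constraints `0 ≤ w i + t c i` and `0 ≤ (1 - w i) - t c i`
  obtain ⟨t, ht, j, hj, htj⟩ := exists_forall_nonneg_add_mul_and_eq_zero
    (S := F.disjSum F) (a := Sum.elim w (1 - w)) (b := Sum.elim c (-c))
    (by rintro (i | i) hi
        · exact (hw i (inl_mem_disjSum.1 hi)).1.le
        · simpa using (hw i (inr_mem_disjSum.1 hi)).2.le)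
    (by obtain ⟨i, hi, hci⟩ := hc
        rcases hci.lt_or_gt with h | h
        · exact ⟨.inl i, inl_mem_disjSum.2 hi, h⟩
        · exact ⟨.inr i, inr_mem_disjSum.2 hi, by simpa using h⟩)
  refine ⟨t, fun i hi => ?_, ?_⟩
  · have h₀ := ht (.inl i) (inl_mem_disjSum.2 hi)
    have h₁ := ht (.inr i) (inr_mem_disjSum.2 hi)
    simp only [Sum.elim_inl, Sum.elim_inr, Pi.sub_apply, Pi.one_apply, Pi.neg_apply] at h₀ h₁
    constructor <;> linarith
  · rcases j with i | i
    · exact ⟨i, inl_mem_disjSum.1 hj, by simp only [Sum.elim_inl] at htj; simp [htj]⟩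
    · refine ⟨i, inr_mem_disjSum.1 hj, fun h => ?_⟩
      simp only [Sum.elim_inr, Pi.sub_apply, Pi.one_apply, Pi.neg_apply] at htj
      linarith [h.2]

variable {x : ι → E} {A : Finset ι} {s : ℝ} {w : ι → ℝ}

theorem IsBalancedWeight.exists_card_fractionalSet_lt [FiniteDimensional ℝ E]
    (hw : IsBalancedWeight x A s w) (hF : finrank ℝ E + 1 < (fractionalSet A w).card) :
    ∃ w', IsBalancedWeight x A s w' ∧ (fractionalSet A w').card < (fractionalSet A w).card := by
  set F := fractionalSet A w
  have hFA : F ⊆ A := fractionalSet_subset A w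
  obtain ⟨c, hcF, hc, hcx, hc₀⟩ := exists_nontrivial_affine_relation_of_finrank_succ_lt_card x hF
  obtain ⟨t, hbox, i, hi, hhit⟩ := exists_add_mul_mem_Icc_and_not_mem_Ioo
    (fun i hi => (mem_fractionalSet.1 hi).2) hc₀
  have hoff : ∀ i ∉ F, (w + t • c) i = w i := fun i hi => by simp [hcF i hi]
  have hcA : ∑ i ∈ A, c i = 0 := by rw [← sum_subset hFA fun i _ hi => hcF i hi, hc]
  have hcxA : ∑ i ∈ A, c i • x i = 0 := by
    rw [← sum_subset hFA fun i _ hi => by rw [hcF i hi, zero_smul], hcx]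
  refine ⟨w + t • c, ⟨fun i hi => ?_, ?_, ?_⟩, card_lt_card ⟨fun j hj => ?_, fun h => ?_⟩⟩
  · by_cases hiF : i ∈ F
    · exact hbox i hiF
    · rw [hoff i hiF]; exact hw.mem_Icc i hi
  · simp only [Pi.add_apply, Pi.smul_apply, smul_eq_mul, sum_add_distrib, ← mul_sum, hw.sum_eq,
      hcA, mul_zero, add_zero]
  · simp only [Pi.add_apply, Pi.smul_apply, smul_eq_mul, add_smul, mul_smul, sum_add_distrib,
      ← smul_sum, hw.sum_smul_eq_zero, hcxA, smul_zero, add_zero]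
  · by_contra hjF
    have ⟨hjA, hj⟩ := mem_fractionalSet.1 hj
    rw [hoff j hjF] at hj
    exact hjF (mem_fractionalSet.2 ⟨hjA, hj⟩)
  · exact hhit (mem_fractionalSet.1 (h hi)).2

theorem IsBalancedWeight.exists_card_fractionalSet_le [FiniteDimensional ℝ E]
    (hw : IsBalancedWeight x A s w) :
    ∃ w', IsBalancedWeight x A s w' ∧ (fractionalSet A w').card ≤ finrank ℝ E + 1 := by
  induction h : (fractionalSet A w).card using Nat.strong_induction_on generalizing w with
  | _ n ih =>
    by_cases hn : n ≤ finrank ℝ E + 1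
    · exact ⟨w, hw, h ▸ hn⟩
    obtain ⟨w', hw', hlt⟩ := hw.exists_card_fractionalSet_lt (h ▸ not_le.1 hn)
    exact ih _ (h ▸ hlt) hw' rfl

theorem IsBalancedWeight.smul (hw : IsBalancedWeight x A s w) {ρ : ℝ} (hρ₀ : 0 ≤ ρ)
    (hρ₁ : ρ ≤ 1) : IsBalancedWeight x A (ρ * s) (ρ • w) where
  mem_Icc i hi := ⟨mul_nonneg hρ₀ (hw.mem_Icc i hi).1,
    mul_le_one₀ hρ₁ (hw.mem_Icc i hi).1 (hw.mem_Icc i hi).2⟩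
  sum_eq := by simp only [Pi.smul_apply, smul_eq_mul, ← mul_sum, hw.sum_eq]
  sum_smul_eq_zero := by
    simp only [Pi.smul_apply, smul_eq_mul, mul_smul, ← smul_sum, hw.sum_smul_eq_zero, smul_zero]

theorem IsBalancedWeight.erase [DecidableEq ι] (hw : IsBalancedWeight x A s w) {i : ι}
    (hi : w i = 0) : IsBalancedWeight x (A.erase i) s w where
  mem_Icc j hj := hw.mem_Icc j (mem_of_mem_erase hj)
  sum_eq := by rw [sum_erase _ hi, hw.sum_eq]
  sum_smul_eq_zero := by rw [sum_erase _ (by rw [hi, zero_smul]), hw.sum_smul_eq_zero]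

theorem IsBalancedWeight.exists_eq_zero (hw : IsBalancedWeight x A s w) (hs : s < A.card)
    (hF : ((fractionalSet A w).card : ℝ) ≤ A.card - s) : ∃ i ∈ A, w i = 0 := by
  by_contra! hne
  set F := fractionalSet A w
  -- otherwise every coordinate outside `F` is `1`, so `∑_F (1 - w i) = |A| - s`,
  -- yet each term of that sum is `< 1`
  have hone : ∀ i ∈ A, i ∉ F → w i = 1 := fun i hi hiF => by
    have ⟨h₀, h₁⟩ := hw.mem_Icc i hi
    have hpos : 0 < w i := h₀.lt_of_ne' (hne i hi)
    simp only [F, mem_fractionalSet, Set.mem_Ioo, not_and, not_lt] at hiF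
    exact le_antisymm h₁ (hiF hi hpos)
  have hsum : ∑ i ∈ F, (1 - w i) = A.card - s := by
    rw [sum_subset (fractionalSet_subset A w) fun i hi hiF => by rw [hone i hi hiF, sub_self],
      sum_sub_distrib, hw.sum_eq, sum_const, nsmul_one]
  rcases F.eq_empty_or_nonempty with hF₀ | hF₀
  · rw [hF₀, sum_empty] at hsum
    linarith
  · have : ∑ i ∈ F, (1 - w i) < ∑ i ∈ F, 1 := sum_lt_sum_of_nonempty hF₀ fun i hi => by
      linarith [(mem_fractionalSet.1 hi).2.1]
    rw [sum_const, nsmul_one] at this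
    linarith

theorem IsBalancedWeight.exists_erase [DecidableEq ι] [FiniteDimensional ℝ E]
    (hk : finrank ℝ E < A.card) (hw : IsBalancedWeight x A (A.card - finrank ℝ E) w) :
    ∃ i ∈ A, ∃ w', IsBalancedWeight x (A.erase i) ((A.erase i).card - finrank ℝ E) w' := by
  have hk' : (finrank ℝ E : ℝ) + 1 ≤ A.card := by exact_mod_cast hk
  set ρ := (A.card - 1 - finrank ℝ E : ℝ) / (A.card - finrank ℝ E)
  have hρs : ρ * (A.card - finrank ℝ E) = A.card - 1 - finrank ℝ E :=
    div_mul_cancel₀ _ (by linarith)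
  obtain ⟨w', hw', hF⟩ := (hw.smul (ρ := ρ) (div_nonneg (by linarith) (by linarith))
    ((div_le_one (by linarith)).2 (by linarith))).exists_card_fractionalSet_le
  rw [hρs] at hw'
  obtain ⟨i, hi, hwi⟩ := hw'.exists_eq_zero (by linarith) (by
    have : ((fractionalSet A w').card : ℝ) ≤ finrank ℝ E + 1 := by exact_mod_cast hF
    linarith)
  refine ⟨i, hi, w', ?_⟩
  rw [card_erase_of_mem hi, Nat.cast_sub (card_pos.2 ⟨i, hi⟩), Nat.cast_one]
  exact hw'.erase hwi

theorem IsBalancedWeight.seminorm_sum_le (p : Seminorm ℝ E) (hx : ∀ i ∈ A, p (x i) ≤ 1)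
    (hw : IsBalancedWeight x A s w) : p (∑ i ∈ A, x i) ≤ A.card - s := by
  have hsum : ∑ i ∈ A, x i = ∑ i ∈ A, (1 - w i) • x i := by
    simp only [sub_smul, one_smul, sum_sub_distrib, hw.sum_smul_eq_zero, sub_zero]
  calc p (∑ i ∈ A, x i) ≤ ∑ i ∈ A, p ((1 - w i) • x i) :=
        hsum ▸ le_sum_of_subadditive p (map_zero p).le (map_add_le_add p) A _
    _ ≤ ∑ i ∈ A, (1 - w i) := sum_le_sum fun i hi => by
        have h₁ : 0 ≤ 1 - w i := sub_nonneg.2 (hw.mem_Icc i hi).2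
        rw [map_smul_eq_mul, Real.norm_of_nonneg h₁]
        exact mul_le_of_le_one_right h₁ (hx i hi)
    _ = A.card - s := by rw [sum_sub_distrib, hw.sum_eq, sum_const, nsmul_one]

theorem isBalancedWeight_zero : IsBalancedWeight x A 0 0 :=
  ⟨fun _ _ => ⟨le_rfl, zero_le_one⟩, by simp, by simp⟩

theorem seminorm_sum_le_finrank (p : Seminorm ℝ E) (hx : ∀ i ∈ A, p (x i) ≤ 1)
    (hw : finrank ℝ E < A.card → ∃ w, IsBalancedWeight x A (A.card - finrank ℝ E) w) :
    p (∑ i ∈ A, x i) ≤ finrank ℝ E := by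
  by_cases hk : finrank ℝ E < A.card
  · obtain ⟨w, hw⟩ := hw hk
    simpa using hw.seminorm_sum_le p hx
  · have hA : (A.card : ℝ) ≤ finrank ℝ E := by exact_mod_cast not_lt.1 hk
    linarith [isBalancedWeight_zero.seminorm_sum_le p hx]

theorem isBalancedWeight_const (hx : ∑ i ∈ A, x i = 0) (hA : A.Nonempty) (hs₀ : 0 ≤ s)
    (hs : s ≤ A.card) : IsBalancedWeight x A s fun _ => s / A.card where
  mem_Icc _ _ := ⟨by positivity, div_le_one_of_le₀ hs (Nat.cast_nonneg _)⟩
  sum_eq := by rw [sum_const, nsmul_eq_mul, mul_div_cancel₀ _ (by simpa using hA.ne_empty)]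
  sum_smul_eq_zero := by rw [← smul_sum, hx, smul_zero]

theorem exists_injective_seminorm_prefix_sum_le [DecidableEq ι] [FiniteDimensional ℝ E]
    (p : Seminorm ℝ E) (hx : ∀ i, p (x i) ≤ 1) :
    ∀ (n : ℕ) (A : Finset ι), A.card = n →
      (finrank ℝ E < n → ∃ w, IsBalancedWeight x A (n - finrank ℝ E) w) →
      ∃ f : Fin n → ι, Function.Injective f ∧ Set.range f = A ∧
        ∀ r ≤ n, p (∑ j ∈ univ.filter (fun j : Fin n => (j : ℕ) < r), x (f j)) ≤ finrank ℝ E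
  | 0, A, hA, _ => ⟨Fin.elim0, fun j => j.elim0, by simp [card_eq_zero.1 hA], fun r _ => by simp⟩
  | n + 1, A, hA, hw => by
    obtain ⟨i, hi, hw'⟩ : ∃ i ∈ A,
        finrank ℝ E < n → ∃ w, IsBalancedWeight x (A.erase i) (n - finrank ℝ E) w := by
      by_cases hk : finrank ℝ E < n + 1
      · obtain ⟨w, hw⟩ := hw hk
        obtain ⟨i, hi, w', hw'⟩ := (hA ▸ hw).exists_erase (hA ▸ hk)
        exact ⟨i, hi, fun _ => ⟨w', by rwa [card_erase_of_mem hi, hA, Nat.add_sub_cancel] at hw'⟩⟩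
      · obtain ⟨i, hi⟩ := (card_pos (s := A)).1 (by rw [hA]; exact n.succ_pos)
        exact ⟨i, hi, fun h => absurd (h.trans n.lt_succ_self) hk⟩
    obtain ⟨f, hf, hrange, hprefix⟩ := exists_injective_seminorm_prefix_sum_le p hx n
      (A.erase i) (by simp [card_erase_of_mem hi, hA]) hw'
    have hg : Function.Injective (Fin.snoc (α := fun _ => ι) f i) :=
      Fin.snoc_injective_of_injective hf (by simp [hrange])
    have hgA : Set.range (Fin.snoc (α := fun _ => ι) f i) = A := by simp [hrange, hi]
    refine ⟨Fin.snoc f i, hg, hgA, fun r hr => ?_⟩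
    rcases hr.lt_or_eq with hr | rfl
    · convert hprefix r (Nat.le_of_lt_succ hr) using 2
      rw [sum_filter, sum_filter, Fin.sum_univ_castSucc]
      simp [Nat.not_lt.2 (Nat.le_of_lt_succ hr)]
    · have hsum : ∑ j ∈ univ.filter (fun j : Fin (n + 1) => (j : ℕ) < n + 1),
          x (Fin.snoc (α := fun _ => ι) f i j) = ∑ a ∈ A, x a := by
        rw [filter_true_of_mem fun j _ => j.isLt, ← sum_image fun a _ b _ h => hg h]
        congr
        apply coe_injective
        simpa using hgA
      rw [hsum]
      exact seminorm_sum_le_finrank p (fun i _ => hx i) (hA ▸ hw)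

end Steinitz

/-- Steinitz lemma (Grinberg–Sevastyanov constant k): a zero-sum sequence of
vectors of norm at most 1 in ℝ^k can be permuted so that all prefix sums have
norm at most k. -/
theorem stmt3 (k M : ℕ) (x : Fin M → (Fin k → ℝ)) (N : (Fin k → ℝ) → ℝ)
    (hN1 : ∀ v w : Fin k → ℝ, N (v + w) ≤ N v + N w)
    (hN2 : ∀ (c : ℝ) (v : Fin k → ℝ), N (c • v) = |c| * N v)
    (hsum : ∑ i, x i = 0) (hbd : ∀ i, N (x i) ≤ 1) :
    ∃ π : Equiv.Perm (Fin M), ∀ r : ℕ, r ≤ M →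
      N (∑ i ∈ Finset.univ.filter (fun i : Fin M => (i : ℕ) < r), x (π i)) ≤ k := by
  let p : Seminorm ℝ (Fin k → ℝ) := Seminorm.of N hN1 fun c v => by rw [hN2, Real.norm_eq_abs]
  have hk : finrank ℝ (Fin k → ℝ) = k := finrank_fin_fun ℝ
  have hw : finrank ℝ (Fin k → ℝ) < M →
      ∃ w, IsBalancedWeight x univ (M - finrank ℝ (Fin k → ℝ)) w := fun hkM => by
    rw [hk] at hkM ⊢
    have hkM' : (k : ℝ) < M := by exact_mod_cast hkM
    exact ⟨_, isBalancedWeight_const hsum (univ_nonempty_iff.2 ⟨⟨k, hkM⟩⟩) (by linarith)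
      (by simp)⟩
  obtain ⟨f, hf, -, hprefix⟩ :=
    exists_injective_seminorm_prefix_sum_le p hbd M univ (card_fin M) hw
  exact ⟨Equiv.ofBijective f hf.bijective_of_finite,
    fun r hr => (hprefix r hr).trans_eq (by rw [hk])⟩
end

section
/- Let H ∈ ℤ^{k×n} and b', b'' ∈ ℤ^k. If z' ∈ {0,1}^n satisfies Hz' = b' and the system Hz = b'', z ∈ {0,1}^n is feasible, then it has a solution z'' with ‖z' − z''‖₁ ≤ (⌈‖b' − b''‖_∞/‖H‖_∞⌉ + 1)·(2k‖H‖_∞ + 1)^k. -/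
open Finset
open scoped Classical

section Steinitz

variable {ι : Type*} {k : ℕ} (A : Finset ι) (v : ι → Fin k → ℝ)

/-- weight system -/
def IsWt (s : ℝ) (μ : ι → ℝ) : Prop :=
  (∀ i ∈ A, 0 ≤ μ i ∧ μ i ≤ 1) ∧ (∑ i ∈ A, μ i = s) ∧ (∀ c, ∑ i ∈ A, μ i * v i c = 0)

noncomputable def fracs (μ : ι → ℝ) : Finset ι := A.filter (fun i => μ i ≠ 0 ∧ μ i ≠ 1)

/-- key perturbation step: many fractional coordinates can be reduced -/
lemma frac_reduce (s : ℝ) (μ : ι → ℝ) (hμ : IsWt A v s μ)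
    (hF : k + 2 ≤ (fracs A μ).card) :
    ∃ μ', IsWt A v s μ' ∧ (fracs A μ').card < (fracs A μ).card := by
  set F := fracs A μ with hFdef
  have hFsub : F ⊆ A := Finset.filter_subset _ _
  have hFmem : ∀ i ∈ F, μ i ≠ 0 ∧ μ i ≠ 1 := by
    intro i hi; exact (Finset.mem_filter.mp hi).2
  -- linear dependence of (1, v i) over F
  have hcard : Module.finrank ℝ (Fin (k+1) → ℝ) < Fintype.card F := by
    rw [Module.finrank_fintype_fun_eq_card, Fintype.card_fin, Fintype.card_coe]
    omega
  have hdep : ¬ LinearIndependent ℝ (fun i : F => (Fin.cons 1 (v i) : Fin (k+1) → ℝ)) := by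
    intro h
    exact absurd (h.fintype_card_le_finrank) (by omega)
  obtain ⟨g, hg0, i0, hgi0⟩ := Fintype.not_linearIndependent_iff.mp hdep
  set c : ι → ℝ := fun i => if h : i ∈ F then g ⟨i, h⟩ else 0 with hc
  have hcF : ∀ i ∉ F, c i = 0 := by intro i hi; simp [hc, hi]
  have hsumc : ∑ i ∈ F, c i = 0 := by
    have := congrFun hg0 0
    simp only [Finset.sum_apply, Pi.smul_apply, Fin.cons_zero, smul_eq_mul, mul_one,
      Pi.zero_apply] at this
    rw [← Finset.sum_coe_sort F c]
    rw [← this]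
    apply Finset.sum_congr rfl
    intro i _
    simp [hc, i.2]
  have hsumcv : ∀ c' : Fin k, ∑ i ∈ F, c i * v i c' = 0 := by
    intro c'
    have := congrFun hg0 c'.succ
    simp only [Finset.sum_apply, Pi.smul_apply, Fin.cons_succ, smul_eq_mul,
      Pi.zero_apply] at this
    rw [← Finset.sum_coe_sort F (fun i => c i * v i c')]
    rw [← this]
    apply Finset.sum_congr rfl
    intro i _
    simp [hc, i.2]
  -- the support of c
  set G := F.filter (fun i => c i ≠ 0) with hG
  have hGne : G.Nonempty := by
    refine ⟨(i0 : ι), Finset.mem_filter.mpr ⟨i0.2, ?_⟩⟩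
    simp [hc, i0.2, hgi0]
  set bnd : ι → ℝ := fun i => if 0 < c i then μ i / c i else (μ i - 1) / c i with hbnd
  set t := G.inf' hGne bnd with ht
  have hμpos : ∀ i ∈ F, 0 < μ i := by
    intro i hi
    rcases (hμ.1 i (hFsub hi)) with ⟨h0, _⟩
    exact lt_of_le_of_ne h0 (Ne.symm (hFmem i hi).1)
  have hμlt1 : ∀ i ∈ F, μ i < 1 := by
    intro i hi
    rcases (hμ.1 i (hFsub hi)) with ⟨_, h1⟩
    exact lt_of_le_of_ne h1 (hFmem i hi).2
  have htpos : 0 < t := by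
    rw [ht, Finset.lt_inf'_iff]
    intro i hi
    rcases Finset.mem_filter.mp hi with ⟨hiF, hci⟩
    by_cases hcpos : 0 < c i
    · simp only [hbnd, if_pos hcpos]
      exact div_pos (hμpos i hiF) hcpos
    · have hcneg : c i < 0 := lt_of_le_of_ne (not_lt.mp hcpos) hci
      simp only [hbnd, if_neg hcpos]
      exact div_pos_of_neg_of_neg (by linarith [hμlt1 i hiF]) hcneg
  obtain ⟨istar, histar, htstar⟩ := Finset.exists_mem_eq_inf' hGne bnd
  rcases Finset.mem_filter.mp histar with ⟨histarF, hcistar⟩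
  set μ' : ι → ℝ := fun i => μ i - t * c i with hμ'
  have hbounds : ∀ i ∈ A, 0 ≤ μ' i ∧ μ' i ≤ 1 := by
    intro i hiA
    by_cases hiG : i ∈ G
    · rcases Finset.mem_filter.mp hiG with ⟨hiF, hci⟩
      have hle : t ≤ bnd i := Finset.inf'_le bnd hiG
      by_cases hcpos : 0 < c i
      · have h1 : t * c i ≤ μ i := by
          have := mul_le_mul_of_nonneg_right hle (le_of_lt hcpos)
          simp only [hbnd, if_pos hcpos] at this
          rwa [div_mul_cancel₀ _ (ne_of_gt hcpos)] at this
        constructor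
        · simp only [hμ']; linarith
        · have : 0 < t * c i := mul_pos htpos hcpos
          have := (hμ.1 i hiA).2
          simp only [hμ']; linarith
      · have hcneg : c i < 0 := lt_of_le_of_ne (not_lt.mp hcpos) hci
        have h1 : μ i - 1 ≤ t * c i := by
          have := mul_le_mul_of_nonpos_right hle (le_of_lt hcneg)
          simp only [hbnd, if_neg hcpos] at this
          rwa [div_mul_cancel₀ _ (ne_of_lt hcneg)] at this
        constructor
        · have : t * c i < 0 := mul_neg_of_pos_of_neg htpos hcneg
          have := (hμ.1 i hiA).1
          simp only [hμ']; linarith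
        · simp only [hμ']; linarith
    · have hci : c i = 0 := by
        by_cases hiF : i ∈ F
        · by_contra hne
          exact hiG (Finset.mem_filter.mpr ⟨hiF, hne⟩)
        · exact hcF i hiF
      simp only [hμ', hci, mul_zero, sub_zero]
      exact hμ.1 i hiA
  have hcA : ∑ i ∈ A, c i = 0 := by
    rw [← Finset.sum_subset hFsub (fun x _ hx => hcF x hx)]
    exact hsumc
  have hcvA : ∀ c' : Fin k, ∑ i ∈ A, c i * v i c' = 0 := by
    intro c'
    rw [← Finset.sum_subset hFsub (fun x _ hx => by rw [hcF x hx, zero_mul])]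
    exact hsumcv c'
  refine ⟨μ', ⟨hbounds, ?_, ?_⟩, ?_⟩
  · simp only [hμ', Finset.sum_sub_distrib, ← Finset.mul_sum, hcA, mul_zero, sub_zero]
    exact hμ.2.1
  · intro c'
    have : ∑ i ∈ A, μ' i * v i c' = ∑ i ∈ A, μ i * v i c' - t * ∑ i ∈ A, c i * v i c' := by
      rw [Finset.mul_sum, ← Finset.sum_sub_distrib]
      apply Finset.sum_congr rfl
      intro i _
      simp only [hμ']; ring
    rw [this, hcvA c', mul_zero, sub_zero]
    exact hμ.2.2 c'
  · -- fracs μ' ⊆ F.erase istar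
    have hμ'istar : μ' istar = 0 ∨ μ' istar = 1 := by
      by_cases hcpos : 0 < c istar
      · left
        show μ istar - t * c istar = 0
        rw [ht, htstar]
        simp only [hbnd, if_pos hcpos]
        rw [div_mul_cancel₀ _ (ne_of_gt hcpos), sub_self]
      · right
        have hcneg : c istar < 0 := lt_of_le_of_ne (not_lt.mp hcpos) hcistar
        show μ istar - t * c istar = 1
        rw [ht, htstar]
        simp only [hbnd, if_neg hcpos]
        rw [div_mul_cancel₀ _ (ne_of_lt hcneg)]
        ring
    have hsub : fracs A μ' ⊆ F.erase istar := by
      intro i hi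
      rcases Finset.mem_filter.mp hi with ⟨hiA, hfrac⟩
      have hiF : i ∈ F := by
        by_contra hiF
        have hci : c i = 0 := hcF i hiF
        have : μ' i = μ i := by simp [hμ', hci]
        have hnotfrac : i ∉ F := hiF
        rw [hFdef, fracs, Finset.mem_filter] at hnotfrac
        push_neg at hnotfrac
        rcases Classical.em (μ i = 0) with h0 | h0
        · exact hfrac.1 (this.trans h0)
        · exact hfrac.2 (this.trans (hnotfrac hiA h0))
      refine Finset.mem_erase.mpr ⟨?_, hiF⟩
      intro heq
      subst heq
      rcases hμ'istar with h | h
      · exact hfrac.1 h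
      · exact hfrac.2 h
    calc (fracs A μ').card ≤ (F.erase istar).card := Finset.card_le_card hsub
      _ < F.card := Finset.card_erase_lt_of_mem histarF

end Steinitz

section Steinitz2

variable {ι : Type*} {k : ℕ} {A : Finset ι} {v : ι → Fin k → ℝ}


lemma no_zero_contra (s : ℝ) (hs : s + k + 1 = A.card) (μ : ι → ℝ) (hμ : IsWt A v s μ)
    (hzero : ∀ i ∈ A, μ i ≠ 0) (hsmall : (fracs A μ).card ≤ k + 1) : False := by
  classical
  set F := fracs A μ with hF
  set O := A.filter (fun i => μ i = 1) with hO
  have hOsub : O ⊆ A := Finset.filter_subset _ _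
  have hAO : A \ O = F := by
    rw [hO, ← Finset.filter_not]
    rw [hF, fracs]
    apply Finset.filter_congr
    intro i hiA
    constructor
    · intro h1; exact ⟨hzero i hiA, h1⟩
    · intro h; exact h.2
  have hsumO : ∑ i ∈ O, μ i = (O.card : ℝ) := by
    rw [Finset.sum_congr rfl (fun i hi => (Finset.mem_filter.mp hi).2), Finset.sum_const,
      nsmul_eq_mul, mul_one]
  have hsplit : ∑ i ∈ F, μ i + ∑ i ∈ O, μ i = s := by
    rw [← hAO, Finset.sum_sdiff hOsub]
    exact hμ.2.1
  have hcardF : (F.card : ℝ) = (A.card : ℝ) - (O.card : ℝ) := by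
    rw [← hAO, Finset.card_sdiff_of_subset hOsub]
    have := Finset.card_le_card hOsub
    push_cast [Nat.cast_sub this]
    ring
  have hsumF : ∑ i ∈ F, μ i = (F.card : ℝ) - k - 1 := by
    have : ∑ i ∈ F, μ i = s - (O.card : ℝ) := by rw [← hsumO]; linarith
    rw [this]; rw [hcardF] at *; linarith
  have hFnonneg : (0:ℝ) ≤ ∑ i ∈ F, μ i := by
    apply Finset.sum_nonneg
    intro i hi
    exact (hμ.1 i (Finset.filter_subset _ _ hi)).1
  have hFle : (F.card : ℝ) ≤ k + 1 := by exact_mod_cast hsmall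
  have hsum0 : ∑ i ∈ F, μ i = 0 := le_antisymm (by linarith) hFnonneg
  have hFcard : (F.card : ℝ) = k + 1 := by linarith
  have hFne : F.Nonempty := by
    rw [← Finset.card_pos]
    have : (0:ℝ) < (F.card : ℝ) := by
      have hk : (0:ℝ) ≤ (k:ℝ) := Nat.cast_nonneg k
      linarith
    exact_mod_cast this
  have hpos : (0:ℝ) < ∑ i ∈ F, μ i := by
    apply Finset.sum_pos _ hFne
    intro i hi
    rcases Finset.mem_filter.mp hi with ⟨hiA, hne, _⟩
    exact lt_of_le_of_ne (hμ.1 i hiA).1 (Ne.symm hne)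
  linarith

lemma exists_zero_coord_aux (s : ℝ) (hs : s + k + 1 = A.card) :
    ∀ r : ℕ, ∀ μ : ι → ℝ, IsWt A v s μ → (fracs A μ).card ≤ r →
    ∃ μ', IsWt A v s μ' ∧ ∃ i ∈ A, μ' i = 0 := by
  intro r
  induction r with
  | zero =>
    intro μ hμ hcard
    by_cases hzero : ∃ i ∈ A, μ i = 0
    · exact ⟨μ, hμ, hzero⟩
    · exfalso
      push_neg at hzero
      exact no_zero_contra s hs μ hμ hzero (by omega)
  | succ r ih =>
    intro μ hμ hcard
    by_cases hzero : ∃ i ∈ A, μ i = 0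
    · exact ⟨μ, hμ, hzero⟩
    · by_cases hbig : k + 2 ≤ (fracs A μ).card
      · obtain ⟨μ', hμ', hlt⟩ := frac_reduce A v s μ hμ hbig
        exact ih μ' hμ' (by omega)
      · exfalso
        push_neg at hzero hbig
        exact no_zero_contra s hs μ hμ hzero (by omega)

end Steinitz2

section Steinitz3

variable {ι : Type*} {k : ℕ} {v : ι → Fin k → ℝ}

lemma step_lemma (j : ℕ) (hjk : k ≤ j) (A : Finset ι) (lam : ι → ℝ)
    (hcard : A.card = j + 1) (hwt : IsWt A v ((j:ℝ) + 1 - k) lam) :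
    ∃ (A' : Finset ι) (lam' : ι → ℝ), A' ⊆ A ∧ A'.card = j ∧ IsWt A' v ((j:ℝ) - k) lam' := by
  classical
  have hden : (0:ℝ) < (j:ℝ) + 1 - k := by
    have : (k:ℝ) ≤ j := by exact_mod_cast hjk
    linarith
  set f : ℝ := ((j:ℝ) - k) / ((j:ℝ) + 1 - k) with hf
  have hf0 : 0 ≤ f := by
    apply div_nonneg _ (le_of_lt hden)
    have : (k:ℝ) ≤ j := by exact_mod_cast hjk
    linarith
  have hf1 : f ≤ 1 := by
    rw [hf, div_le_one hden]; linarith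
  set μ₀ : ι → ℝ := fun i => f * lam i with hμ₀
  have hwt₀ : IsWt A v ((j:ℝ) - k) μ₀ := by
    refine ⟨?_, ?_, ?_⟩
    · intro i hi
      rcases hwt.1 i hi with ⟨h0, h1⟩
      constructor
      · exact mul_nonneg hf0 h0
      · simpa using mul_le_mul hf1 h1 h0 zero_le_one
    · simp only [hμ₀, ← Finset.mul_sum]
      rw [hwt.2.1, hf, div_mul_cancel₀ _ (ne_of_gt hden)]
    · intro c
      simp only [hμ₀]
      have : ∑ i ∈ A, f * lam i * v i c = f * ∑ i ∈ A, lam i * v i c := by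
        rw [Finset.mul_sum]; exact Finset.sum_congr rfl fun i _ => by ring
      rw [this, hwt.2.2 c, mul_zero]
  have hs : ((j:ℝ) - k) + k + 1 = A.card := by
    rw [hcard]; push_cast; ring
  obtain ⟨μ', hμ', i0, hi0A, hi0⟩ :=
    exists_zero_coord_aux ((j:ℝ) - k) hs (fracs A μ₀).card μ₀ hwt₀ le_rfl
  refine ⟨A.erase i0, μ', Finset.erase_subset _ _, ?_, ?_, ?_, ?_⟩
  · rw [Finset.card_erase_of_mem hi0A, hcard]; omega
  · intro i hi
    exact hμ'.1 i (Finset.erase_subset _ _ hi)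
  · rw [Finset.sum_erase _ hi0]
    exact hμ'.2.1
  · intro c
    rw [Finset.sum_erase _ (by rw [hi0, zero_mul])]
    exact hμ'.2.2 c

end Steinitz3

section Steinitz4

variable {ι : Type*} {k : ℕ} {v : ι → Fin k → ℝ}

lemma good_chain [Fintype ι] (hsum : ∀ c, ∑ i, v i c = 0) (hkN : k ≤ Fintype.card ι) :
    ∀ d : ℕ, d ≤ Fintype.card ι - k → ∃ (A : ℕ → Finset ι) (lam : ℕ → ι → ℝ),
    (∀ l, Fintype.card ι - d ≤ l → l ≤ Fintype.card ι →
      (A l).card = l ∧ IsWt (A l) v ((l:ℝ) - k) (lam l)) ∧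
    (∀ l, Fintype.card ι - d ≤ l → l < Fintype.card ι → A l ⊆ A (l+1)) := by
  classical
  set N := Fintype.card ι with hN
  intro d
  induction d with
  | zero =>
    intro _
    by_cases hN0 : N = 0
    · refine ⟨fun _ => Finset.univ, fun _ _ => 0, ?_, ?_⟩
      · intro l hl1 hl2
        have hl : l = 0 := by omega
        have hk0 : k = 0 := by omega
        subst hl
        refine ⟨?_, ?_, ?_, ?_⟩
        · rw [Finset.card_univ, ← hN, hN0]
        · intro i _; norm_num
        · have : (Finset.univ : Finset ι) = ∅ := by
            rw [← Finset.card_eq_zero, Finset.card_univ, ← hN, hN0]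
          rw [this, Finset.sum_empty, hk0]
          norm_num
        · intro c
          have : (Finset.univ : Finset ι) = ∅ := by
            rw [← Finset.card_eq_zero, Finset.card_univ, ← hN, hN0]
          rw [this, Finset.sum_empty]
      · intro l hl1 hl2; exact subset_rfl
    · have hNpos : (0:ℝ) < (N:ℝ) := by
        have : 0 < N := Nat.pos_of_ne_zero hN0
        exact_mod_cast this
      refine ⟨fun _ => Finset.univ, fun _ _ => ((N:ℝ) - k) / N, ?_, ?_⟩
      · intro l hl1 hl2
        have hl : l = N := by omega
        subst hl
        have hkr : (k:ℝ) ≤ (N:ℝ) := by exact_mod_cast hkN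
        refine ⟨?_, ?_, ?_, ?_⟩
        · rw [Finset.card_univ]
        · intro i _
          constructor
          · apply div_nonneg (by linarith) (le_of_lt hNpos)
          · rw [div_le_one hNpos]; linarith
        · rw [Finset.sum_const, Finset.card_univ, ← hN, nsmul_eq_mul,
            mul_div_cancel₀ _ (ne_of_gt hNpos)]
        · intro c
          have : ∑ i ∈ (Finset.univ : Finset ι), ((N:ℝ) - k) / N * v i c
              = ((N:ℝ) - k) / N * ∑ i, v i c := by
            rw [Finset.mul_sum]
          simp only [this, hsum c, mul_zero]
      · intro l _ _; exact subset_rfl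
  | succ d ih =>
    intro hd
    obtain ⟨A, lam, hgood, hsub⟩ := ih (by omega)
    set j := N - (d+1) with hj
    have hjk : k ≤ j := by omega
    have hj1 : j + 1 = N - d := by omega
    have hj1N : j + 1 ≤ N := by omega
    obtain ⟨hcard1, hwt1⟩ := hgood (j+1) (by omega) hj1N
    have hwt1' : IsWt (A (j+1)) v ((j:ℝ) + 1 - k) (lam (j+1)) := by
      have : ((j:ℝ) + 1 : ℝ) = ((j+1 : ℕ) : ℝ) := by push_cast; ring
      rw [this]; exact hwt1
    obtain ⟨A', lam', hA'sub, hA'card, hA'wt⟩ := step_lemma j hjk (A (j+1)) (lam (j+1)) hcard1 hwt1'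
    refine ⟨fun l => if l ≤ j then A' else A l, fun l => if l ≤ j then lam' else lam l, ?_, ?_⟩
    · intro l hl1 hl2
      by_cases hlj : l ≤ j
      · have : l = j := by omega
        subst this
        simp only [if_pos hlj]
        exact ⟨hA'card, hA'wt⟩
      · simp only [if_neg hlj]
        exact hgood l (by omega) hl2
    · intro l hl1 hl2
      by_cases hlj : l ≤ j
      · have hlj' : l = j := by omega
        subst hlj'
        have h2 : ¬ (j + 1 ≤ j) := by omega
        simp only [if_pos hlj, if_neg h2]
        exact hA'sub
      · have h2 : ¬ (l + 1 ≤ j) := by omega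
        simp only [if_neg hlj, if_neg h2]
        exact hsub l (by omega) hl2

end Steinitz4

section Steinitz5

variable {ι : Type*} {k : ℕ} {v : ι → Fin k → ℝ}

lemma low_chain {α : Type*} [DecidableEq α] (s : Finset α) :
    ∃ C : ℕ → Finset α, (∀ j, C j ⊆ C (j+1)) ∧ (∀ j, (C j).card = min j s.card) ∧
      (∀ j, C j ⊆ s) := by
  refine ⟨fun j => (s.toList.take j).toFinset, ?_, ?_, ?_⟩
  · intro j x hx
    rw [List.mem_toFinset] at hx ⊢
    have : s.toList.take j = (s.toList.take (j+1)).take j := by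
      rw [List.take_take]
      congr 1
      omega
    rw [this] at hx
    exact List.take_subset _ _ hx
  · intro j
    have hnd : (s.toList.take j).Nodup := (List.take_sublist j s.toList).nodup s.nodup_toList
    rw [List.toFinset_card_of_nodup hnd, List.length_take, Finset.length_toList]
  · intro j x hx
    rw [List.mem_toFinset] at hx
    exact Finset.mem_toList.mp (List.take_subset _ _ hx)

lemma sum_bound_card (B : ℝ) (hB0 : 0 ≤ B) (hB : ∀ i c, |v i c| ≤ B)
    {A : Finset ι} (hcard : A.card ≤ k) (c : Fin k) : |∑ i ∈ A, v i c| ≤ (k:ℝ) * B := by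
  calc |∑ i ∈ A, v i c| ≤ ∑ i ∈ A, |v i c| := Finset.abs_sum_le_sum_abs _ _
    _ ≤ ∑ _i ∈ A, B := Finset.sum_le_sum (fun i _ => hB i c)
    _ = (A.card : ℝ) * B := by rw [Finset.sum_const, nsmul_eq_mul]
    _ ≤ (k:ℝ) * B := by
        apply mul_le_mul_of_nonneg_right _ hB0
        exact_mod_cast hcard

lemma sum_bound_wt (B : ℝ) (hB0 : 0 ≤ B) (hB : ∀ i c, |v i c| ≤ B)
    {A : Finset ι} {lam : ι → ℝ} {l : ℕ} (hwt : IsWt A v ((l:ℝ) - k) lam)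
    (hcard : A.card = l) (c : Fin k) : |∑ i ∈ A, v i c| ≤ (k:ℝ) * B := by
  have heq : ∑ i ∈ A, v i c = ∑ i ∈ A, (1 - lam i) * v i c := by
    have : ∑ i ∈ A, (1 - lam i) * v i c = ∑ i ∈ A, v i c - ∑ i ∈ A, lam i * v i c := by
      rw [← Finset.sum_sub_distrib]
      exact Finset.sum_congr rfl fun i _ => by ring
    rw [this, hwt.2.2 c, sub_zero]
  rw [heq]
  have hsum1 : ∑ i ∈ A, (1 - lam i) = (k:ℝ) := by
    rw [Finset.sum_sub_distrib, Finset.sum_const, hwt.2.1, nsmul_eq_mul, mul_one, hcard]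
    ring
  calc |∑ i ∈ A, (1 - lam i) * v i c| ≤ ∑ i ∈ A, |(1 - lam i) * v i c| :=
        Finset.abs_sum_le_sum_abs _ _
    _ ≤ ∑ i ∈ A, (1 - lam i) * B := by
        apply Finset.sum_le_sum
        intro i hi
        rw [abs_mul]
        have h1 : 0 ≤ 1 - lam i := by linarith [(hwt.1 i hi).2]
        rw [abs_of_nonneg h1]
        exact mul_le_mul_of_nonneg_left (hB i c) h1
    _ = (k:ℝ) * B := by rw [← Finset.sum_mul, hsum1]

lemma steinitz_chain [Fintype ι] (B : ℝ) (hB0 : 0 ≤ B) (hB : ∀ i c, |v i c| ≤ B)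
    (hsum : ∀ c, ∑ i, v i c = 0) :
    ∃ C : ℕ → Finset ι, (∀ j, C j ⊆ C (j+1)) ∧ (∀ j, (C j).card = min j (Fintype.card ι)) ∧
      (∀ j c, |∑ i ∈ C j, v i c| ≤ (k:ℝ) * B) := by
  classical
  set N := Fintype.card ι with hN
  by_cases hkN : N ≤ k
  · obtain ⟨C, h1, h2, h3⟩ := low_chain (Finset.univ : Finset ι)
    refine ⟨C, h1, ?_, ?_⟩
    · intro j
      rw [h2 j, Finset.card_univ]
    · intro j c
      apply sum_bound_card B hB0 hB _ c
      rw [h2 j, Finset.card_univ]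
      omega
  · have hkN' : k ≤ N := by omega
    obtain ⟨A, lam, hgood, hsub⟩ := good_chain hsum hkN' (N - k) le_rfl
    have hNk : N - (N - k) = k := by omega
    have hAk : (A k).card = k := (hgood k (by omega) (by omega)).1
    obtain ⟨L, hL1, hL2, hL3⟩ := low_chain (A k)
    have hLmono : Monotone L := monotone_nat_of_le_succ hL1
    have hLk : L k = A k := by
      apply Finset.eq_of_subset_of_card_le (hL3 k)
      rw [hL2 k, hAk]
      omega
    refine ⟨fun j => if j < k then L j else A (min j N), ?_, ?_, ?_⟩
    · intro j
      by_cases hj : j < k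
      · by_cases hj1 : j + 1 < k
        · simp only [if_pos hj, if_pos hj1]
          exact hL1 j
        · have hj1k : j + 1 = k := by omega
          simp only [if_pos hj, if_neg hj1]
          have : min (j+1) N = k := by omega
          rw [this]
          calc L j ⊆ L k := hLmono (by omega)
            _ = A k := hLk
      · have hj1 : ¬ (j + 1 < k) := by omega
        simp only [if_neg hj, if_neg hj1]
        by_cases hjN : j < N
        · have h1 : min j N = j := by omega
          have h2 : min (j+1) N = j + 1 := by omega
          rw [h1, h2]
          exact hsub j (by omega) hjN
        · have : min j N = min (j+1) N := by omega
          rw [this]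
    · intro j
      by_cases hj : j < k
      · simp only [if_pos hj]
        rw [hL2 j, hAk]
        omega
      · simp only [if_neg hj]
        have := (hgood (min j N) (by omega) (by omega)).1
        rw [this]
    · intro j c
      by_cases hj : j < k
      · simp only [if_pos hj]
        apply sum_bound_card B hB0 hB _ c
        rw [hL2 j, hAk]
        omega
      · simp only [if_neg hj]
        obtain ⟨hc, hwt⟩ := hgood (min j N) (by omega) (by omega)
        exact sum_bound_wt B hB0 hB hwt hc c

end Steinitz5

section KeyClaim

lemma key_claim (k n : ℕ) (H : Matrix (Fin k) (Fin n) ℤ) (b'' : Fin k → ℤ)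
    (z' : Fin n → ℤ) (hz' : ∀ i, z' i = 0 ∨ z' i = 1)
    (h R : ℕ)
    (hH : ∀ c i, |H c i| ≤ (h:ℤ))
    (z'' : Fin n → ℤ) (hP1 : ∀ i, z'' i = 0 ∨ z'' i = 1) (hP2 : H.mulVec z'' = b'')
    (hmin : ∀ z : Fin n → ℤ, (∀ i, z i = 0 ∨ z i = 1) → H.mulVec z = b'' →
      (Finset.univ.filter (fun i => z'' i ≠ z' i)).card ≤
        (Finset.univ.filter (fun i => z i ≠ z' i)).card)
    (Δ : Fin k → ℤ) (hΔ : ∀ c, (H.mulVec z'') c - (H.mulVec z') c = Δ c)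
    (hΔR : ∀ c, |Δ c| ≤ (h:ℤ) * R) :
    (Finset.univ.filter (fun i => z'' i ≠ z' i)).card + R + 1 ≤ (R+1) * (2*k*h+1)^k := by
  classical
  by_contra hbig
  push_neg at hbig
  set T := Finset.univ.filter (fun i : Fin n => z'' i ≠ z' i) with hT
  set m := T.card with hm
  set d : Fin n → ℤ := fun i => z'' i - z' i with hd
  have hd0 : ∀ i, i ∉ T → d i = 0 := by
    intro i hi
    rw [hT] at hi
    simp only [Finset.mem_filter, Finset.mem_univ, true_and, not_not] at hi
    simp [hd, hi]
  have hd1 : ∀ i, i ∈ T → d i = 1 ∨ d i = -1 := by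
    intro i hi
    rw [hT] at hi
    simp only [Finset.mem_filter, Finset.mem_univ, true_and] at hi
    rcases hz' i with h1|h1 <;> rcases hP1 i with h2|h2 <;> simp only [hd] <;> omega
  set w : ({ i // i ∈ T } ⊕ Fin R) → Fin k → ℤ :=
    fun x c => Sum.elim (fun i : { i // i ∈ T } => H c i.1 * d i.1) (fun _ => 0) x with hw
  set v : ({ i // i ∈ T } ⊕ Fin R) → Fin k → ℝ :=
    fun x c => Sum.elim (fun i : { i // i ∈ T } => ((H c i.1 * d i.1 : ℤ) : ℝ))
      (fun _ => -((Δ c : ℤ) : ℝ) / (R : ℝ)) x with hv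
  have hdabs : ∀ i ∈ T, |d i| = 1 := by
    intro i hi
    rcases hd1 i hi with h1|h1 <;> simp [h1]
  have hvB : ∀ x c, |v x c| ≤ (h:ℝ) := by
    intro x c
    cases x with
    | inl i =>
      have : |H c i.1 * d i.1| ≤ (h:ℤ) := by
        rw [abs_mul, hdabs i.1 i.2, mul_one]
        exact hH c i.1
      simp only [hv, Sum.elim_inl]
      rw [← Int.cast_abs]
      exact_mod_cast this
    | inr r =>
      simp only [hv, Sum.elim_inr]
      have hR : 0 < R := by
        rcases Nat.eq_zero_or_pos R with h0|h0
        · exact absurd r.isLt (by omega)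
        · exact h0
      have hRr : (0:ℝ) < (R:ℝ) := by exact_mod_cast hR
      rw [abs_div, abs_neg, abs_of_nonneg (le_of_lt hRr), div_le_iff₀ hRr]
      rw [← Int.cast_abs]
      have := hΔR c
      have h2 : ((|Δ c| : ℤ):ℝ) ≤ (((h:ℤ) * R : ℤ):ℝ) := by exact_mod_cast this
      calc ((|Δ c| : ℤ):ℝ) ≤ (((h:ℤ) * R : ℤ):ℝ) := h2
        _ = (h:ℝ) * (R:ℝ) := by push_cast; ring
  have hsumT : ∀ c : Fin k, ∑ i ∈ T, H c i * d i = Δ c := by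
    intro c
    have : ∑ i ∈ T, H c i * d i = ∑ i : Fin n, H c i * d i := by
      apply Finset.sum_subset (Finset.subset_univ _)
      intro i _ hi
      rw [hd0 i hi, mul_zero]
    rw [this, ← hΔ c]
    simp only [Matrix.mulVec, dotProduct]
    rw [← Finset.sum_sub_distrib]
    apply Finset.sum_congr rfl
    intro i _
    rw [hd]
    ring
  have hvsum : ∀ c, ∑ x, v x c = 0 := by
    intro c
    rw [Fintype.sum_sum_type]
    have h1 : ∑ i : { i // i ∈ T }, v (Sum.inl i) c = ((Δ c : ℤ) : ℝ) := by
      simp only [hv, Sum.elim_inl]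
      rw [← hsumT c]
      push_cast
      exact Finset.sum_coe_sort T (fun i => ((H c i : ℝ) * (d i : ℝ)))
    have h2 : ∑ _r : Fin R, (-((Δ c : ℤ) : ℝ) / (R : ℝ)) = -((Δ c : ℤ) : ℝ) := by
      rcases Nat.eq_zero_or_pos R with h0|h0
      · have : Δ c = 0 := by
          have := hΔR c
          rw [h0] at this
          simp at this
          omega
        subst h0
        simp [this]
      · rw [Finset.sum_const, Finset.card_univ, Fintype.card_fin, nsmul_eq_mul]
        have hRr : (R:ℝ) ≠ 0 := by positivity
        field_simp
    rw [h1]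
    simp only [hv, Sum.elim_inr]
    rw [h2]
    ring
  obtain ⟨C, hCsub, hCcard, hCbound⟩ := steinitz_chain (v := v) (h:ℝ) (by positivity) hvB hvsum
  have hcardι : Fintype.card ({ i // i ∈ T } ⊕ Fin R) = m + R := by
    rw [Fintype.card_sum, Fintype.card_coe, Fintype.card_fin]
  have Cmono : Monotone C := monotone_nat_of_le_succ hCsub
  set r : ℕ → ℕ := fun j => ((C j).filter (fun x => x.isRight)).card with hr
  set q : ℕ → Fin k → ℤ := fun j c => ∑ x ∈ C j, w x c with hq
  have hrel : ∀ j c, ∑ x ∈ C j, v x c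
      = ((q j c : ℤ) : ℝ) - (r j : ℝ) * (((Δ c : ℤ):ℝ) / (R:ℝ)) := by
    intro j c
    have hsplit : ∀ x : { i // i ∈ T } ⊕ Fin R, v x c
        = ((w x c : ℤ) : ℝ) + (if x.isRight then -((Δ c : ℤ):ℝ)/(R:ℝ) else 0) := by
      intro x
      cases x with
      | inl i => simp [hv, hw]
      | inr rr => simp [hv, hw]
    rw [Finset.sum_congr rfl (fun x _ => hsplit x), Finset.sum_add_distrib]
    have h1 : ∑ x ∈ C j, ((w x c : ℤ) : ℝ) = ((q j c : ℤ) : ℝ) := by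
      rw [hq]; push_cast; rfl
    have h2 : ∑ x ∈ C j, (if x.isRight then -((Δ c : ℤ):ℝ)/(R:ℝ) else 0)
        = (r j : ℝ) * (-((Δ c : ℤ):ℝ)/(R:ℝ)) := by
      rw [← Finset.sum_filter, Finset.sum_const, nsmul_eq_mul, hr]
    rw [h1, h2]
    ring
  set anchor : ℕ → Fin k → ℤ :=
    fun rr c => ⌈(rr:ℝ) * (((Δ c : ℤ):ℝ) / (R:ℝ)) - (k:ℝ)*(h:ℝ)⌉ with hanchor
  have hbox : ∀ j c, 0 ≤ q j c - anchor (r j) c ∧ q j c - anchor (r j) c ≤ (2*k*h : ℕ) := by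
    intro j c
    have hb := hCbound j c
    rw [hrel j c] at hb
    rw [abs_le] at hb
    set x : ℝ := (r j : ℝ) * (((Δ c : ℤ):ℝ) / (R:ℝ)) with hx
    have hlow : anchor (r j) c ≤ q j c := by
      rw [hanchor]
      rw [Int.ceil_le]
      push_cast
      linarith [hb.1]
    have hceil : x - (k:ℝ)*(h:ℝ) ≤ ((anchor (r j) c : ℤ) : ℝ) := Int.le_ceil _
    constructor
    · omega
    · have : ((q j c - anchor (r j) c : ℤ) : ℝ) ≤ ((2*k*h : ℕ) : ℝ) := by
        push_cast
        push_cast at hceil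
        have hup : ((q j c : ℤ):ℝ) ≤ x + (k:ℝ)*(h:ℝ) := by linarith [hb.2]
        linarith
      exact_mod_cast this
  have hrle : ∀ j, r j ≤ R := by
    intro j
    have hset : (Finset.univ.filter (fun x : { i // i ∈ T } ⊕ Fin R => x.isRight))
        = Finset.univ.image Sum.inr := by
      ext x
      cases x <;> simp
    have : r j ≤ (Finset.univ.filter (fun x : { i // i ∈ T } ⊕ Fin R => x.isRight)).card :=
      Finset.card_le_card (Finset.filter_subset_filter _ (Finset.subset_univ _))
    rw [hset, Finset.card_image_of_injective _ Sum.inr_injective, Finset.card_univ,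
      Fintype.card_fin] at this
    exact this
  -- pigeonhole
  set Φ : ℕ → ℕ × (Fin k → ℕ) :=
    fun j => (r j, fun c => (q j c - anchor (r j) c).toNat) with hΦ
  have hmaps : ∀ j ∈ Finset.range (m+R+1),
      Φ j ∈ (Finset.range (R+1)) ×ˢ Fintype.piFinset (fun _ : Fin k => Finset.range (2*k*h+1)) := by
    intro j _
    simp only [hΦ]
    rw [Finset.mem_product]
    constructor
    · rw [Finset.mem_range]
      exact Nat.lt_succ_of_le (hrle j)
    · rw [Fintype.mem_piFinset]
      intro c
      rw [Finset.mem_range]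
      show (q j c - anchor (r j) c).toNat < 2*k*h+1
      have h2 : (q j c - anchor (r j) c).toNat ≤ 2*k*h := by
        rw [Int.toNat_le]
        exact_mod_cast (hbox j c).2
      omega
  have hcards : ((Finset.range (R+1)) ×ˢ
      Fintype.piFinset (fun _ : Fin k => Finset.range (2*k*h+1))).card
      < (Finset.range (m+R+1)).card := by
    rw [Finset.card_product, Finset.card_range, Finset.card_range, Fintype.card_piFinset]
    simp only [Finset.card_range, Finset.prod_const, Finset.card_univ, Fintype.card_fin]
    exact hbig
  obtain ⟨j1, hj1, j2, hj2, hne, heq⟩ :=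
    Finset.exists_ne_map_eq_of_card_lt_of_maps_to hcards hmaps
  rw [Finset.mem_range] at hj1 hj2
  -- a symmetric final contradiction
  have final : ∀ ja jb : ℕ, ja < jb → jb ≤ m + R → r ja = r jb →
      (∀ c, q ja c = q jb c) → False := by
    intro ja jb hab hbN hre hqe
    have hsub : C ja ⊆ C jb := Cmono (le_of_lt hab)
    have hcarda : (C ja).card = ja := by
      rw [hCcard ja, hcardι]
      omega
    have hcardb : (C jb).card = jb := by
      rw [hCcard jb, hcardι]
      omega
    set S := C jb \ C ja with hS
    have hScard : S.card = jb - ja := by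
      rw [hS, Finset.card_sdiff_of_subset hsub, hcarda, hcardb]
    have hSne : S.Nonempty := by
      rw [← Finset.card_pos, hScard]
      omega
    -- rights coincide
    have hrsub : (C ja).filter (fun x => x.isRight) ⊆ (C jb).filter (fun x => x.isRight) :=
      Finset.filter_subset_filter _ hsub
    have hreq : (C ja).filter (fun x => x.isRight) = (C jb).filter (fun x => x.isRight) :=
      Finset.eq_of_subset_of_card_le hrsub (le_of_eq hre.symm)
    have hSleft : ∀ x ∈ S, ∃ a : { i // i ∈ T }, x = Sum.inl a := by
      intro x hx
      rw [hS, Finset.mem_sdiff] at hx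
      cases x with
      | inl a => exact ⟨a, rfl⟩
      | inr rr =>
        exfalso
        have : (Sum.inr rr : { i // i ∈ T } ⊕ Fin R) ∈ (C jb).filter (fun x => x.isRight) := by
          rw [Finset.mem_filter]
          exact ⟨hx.1, rfl⟩
        rw [← hreq, Finset.mem_filter] at this
        exact hx.2 this.1
    have hSsum : ∀ c, ∑ x ∈ S, w x c = 0 := by
      intro c
      have h5 := Finset.sum_sdiff (f := fun x => w x c) hsub
      have h6 : ∑ x ∈ C ja, w x c = ∑ x ∈ C jb, w x c := hqe c
      rw [hS]
      linarith [h5, h6]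
    -- project to Fin n
    have hinj : Set.InjOn (Sum.inl : { i // i ∈ T } → { i // i ∈ T } ⊕ Fin R)
        (Sum.inl ⁻¹' (↑S : Set ({ i // i ∈ T } ⊕ Fin R))) := Sum.inl_injective.injOn
    set S₁ : Finset { i // i ∈ T } := S.preimage Sum.inl hinj with hS₁
    have hS₁sum : ∀ c, ∑ i ∈ S₁, H c i.1 * d i.1 = 0 := by
      intro c
      have := Finset.sum_preimage (Sum.inl : { i // i ∈ T } → _) S hinj (fun x => w x c) ?_
      · rw [← hSsum c, ← this]
        apply Finset.sum_congr rfl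
        intro i _
        simp [hw]
      · intro x hx hxr
        rcases hSleft x hx with ⟨a, rfl⟩
        exact absurd ⟨a, rfl⟩ hxr
    have hS₁ne : S₁.Nonempty := by
      obtain ⟨x, hx⟩ := hSne
      rcases hSleft x hx with ⟨a, rfl⟩
      exact ⟨a, Finset.mem_preimage.mpr hx⟩
    set S₀ : Finset (Fin n) := S₁.image Subtype.val with hS₀
    have hS₀T : S₀ ⊆ T := by
      intro i hi
      rw [hS₀, Finset.mem_image] at hi
      obtain ⟨a, _, rfl⟩ := hi
      exact a.2
    have hS₀ne : S₀.Nonempty := by rw [hS₀]; exact hS₁ne.image _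
    have hS₀sum : ∀ c, ∑ i ∈ S₀, H c i * d i = 0 := by
      intro c
      rw [hS₀, Finset.sum_image]
      · exact hS₁sum c
      · intro a _ b _ hab2
        exact Subtype.val_injective hab2
    -- new solution
    set z3 : Fin n → ℤ := fun i => if i ∈ S₀ then z' i else z'' i with hz3
    have hz3b : ∀ i, z3 i = 0 ∨ z3 i = 1 := by
      intro i
      rw [hz3]
      by_cases hi : i ∈ S₀
      · simp only [if_pos hi]; exact hz' i
      · simp only [if_neg hi]; exact hP1 i
    have hz3v : H.mulVec z3 = b'' := by
      funext c
      have hdec : ∀ i, z3 i = z'' i - (if i ∈ S₀ then d i else 0) := by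
        intro i
        by_cases hi : i ∈ S₀
        · simp only [hz3, if_pos hi, hd]; ring
        · simp only [hz3, if_neg hi]; ring
      have : (H.mulVec z3) c = (H.mulVec z'') c - ∑ i ∈ S₀, H c i * d i := by
        simp only [Matrix.mulVec, dotProduct]
        have e1 : ∀ i, H c i * z3 i = H c i * z'' i - (if i ∈ S₀ then H c i * d i else 0) := by
          intro i
          rw [hdec i]
          split_ifs with hi <;> ring
        rw [Finset.sum_congr rfl (fun i _ => e1 i), Finset.sum_sub_distrib]
        congr 1
        rw [← Finset.sum_filter (fun i => i ∈ S₀) (fun i => H c i * d i),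
          Finset.filter_mem_eq_inter, Finset.univ_inter]
      rw [this, hS₀sum c, sub_zero, hP2]
    have hlt' : (Finset.univ.filter (fun i => z3 i ≠ z' i)).card < m := by
      have hfeq : Finset.univ.filter (fun i => z3 i ≠ z' i) = T \ S₀ := by
        ext i
        simp only [Finset.mem_filter, Finset.mem_univ, true_and, Finset.mem_sdiff, hT]
        by_cases hi : i ∈ S₀
        · simp only [hz3, if_pos hi]
          constructor
          · intro hcon; exact absurd rfl hcon
          · rintro ⟨_, hcon⟩; exact absurd hi hcon
        · simp only [hz3, if_neg hi]
          tauto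
      rw [hfeq, Finset.card_sdiff_of_subset hS₀T]
      have h1 : 1 ≤ S₀.card := Finset.card_pos.mpr hS₀ne
      have h2 : S₀.card ≤ T.card := Finset.card_le_card hS₀T
      omega
    have := hmin z3 hz3b hz3v
    omega
  have hr12 : r j1 = r j2 := by
    have := (Prod.ext_iff.mp heq).1
    simpa [hΦ] using this
  have hqeq : ∀ c, q j1 c = q j2 c := by
    intro c
    have h2 := congrFun (Prod.ext_iff.mp heq).2 c
    simp only [hΦ] at h2
    have e1 := congrArg (fun t : ℕ => (t : ℤ)) h2
    simp only [Int.toNat_of_nonneg (hbox j1 c).1, Int.toNat_of_nonneg (hbox j2 c).1] at e1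
    rw [hr12] at e1
    omega
  rcases hne.lt_or_gt with hlt|hlt
  · exact final j1 j2 hlt (by omega) hr12 hqeq
  · exact final j2 j1 hlt (by omega) hr12.symm (fun c => (hqeq c).symm)

end KeyClaim

/-- Sensitivity lemma for integer programs in standard form, integral case (φ = 0). -/
theorem stmt5 (k n : ℕ) (H : Matrix (Fin k) (Fin n) ℤ) (b' b'' : Fin k → ℤ)
    (z' : Fin n → ℤ) (hz' : ∀ i, z' i = 0 ∨ z' i = 1) (hHz' : H.mulVec z' = b')
    (hfeas : ∃ z : Fin n → ℤ, (∀ i, z i = 0 ∨ z i = 1) ∧ H.mulVec z = b'') :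
    ∃ z'' : Fin n → ℤ, (∀ i, z'' i = 0 ∨ z'' i = 1) ∧ H.mulVec z'' = b'' ∧
      ((∑ i, |z' i - z'' i| : ℤ) : ℝ) ≤
        ((⌈((Finset.univ.sup (fun i => (b' i - b'' i).natAbs) : ℕ) : ℝ) /
            ((Finset.univ.sup (fun p : Fin k × Fin n => (H p.1 p.2).natAbs) : ℕ) : ℝ)⌉ : ℝ) + 1) *
        (2 * k * ((Finset.univ.sup (fun p : Fin k × Fin n => (H p.1 p.2).natAbs) : ℕ) : ℝ) + 1) ^ k := by
  classical
  set h : ℕ := Finset.univ.sup (fun p : Fin k × Fin n => (H p.1 p.2).natAbs) with hh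
  set D : ℕ := Finset.univ.sup (fun i => (b' i - b'' i).natAbs) with hD
  have hHb : ∀ c i, |H c i| ≤ (h:ℤ) := by
    intro c i
    rw [Int.abs_eq_natAbs]
    exact_mod_cast Finset.le_sup (f := fun p : Fin k × Fin n => (H p.1 p.2).natAbs)
      (Finset.mem_univ (c, i))
  have hDb : ∀ c, |b' c - b'' c| ≤ (D:ℤ) := by
    intro c
    rw [Int.abs_eq_natAbs]
    exact_mod_cast Finset.le_sup (f := fun i => (b' i - b'' i).natAbs) (Finset.mem_univ c)
  by_cases hh0 : h = 0
  · -- H = 0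
    have hH0 : ∀ c i, H c i = 0 := by
      intro c i
      have := hHb c i
      rw [hh0] at this
      simpa using this
    have hmv : ∀ z : Fin n → ℤ, ∀ c, (H.mulVec z) c = 0 := by
      intro z c
      simp only [Matrix.mulVec, dotProduct]
      apply Finset.sum_eq_zero
      intro i _
      rw [hH0 c i, zero_mul]
    obtain ⟨z₀, hz₀b, hz₀v⟩ := hfeas
    have hb'' : ∀ c, b'' c = 0 := by
      intro c
      rw [← congrFun hz₀v c]
      exact hmv z₀ c
    have hb' : ∀ c, b' c = 0 := by
      intro c
      rw [← congrFun hHz' c]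
      exact hmv z' c
    refine ⟨z', hz', ?_, ?_⟩
    · funext c
      rw [hmv z' c, hb'' c]
    · have hD0 : D = 0 := by
        rw [hD]
        apply Nat.le_antisymm _ (Nat.zero_le _)
        apply Finset.sup_le
        intro c _
        rw [hb' c, hb'' c]
        simp
      rw [hD0, hh0]
      simp
  · have hh1 : 1 ≤ h := by omega
    set R : ℕ := (D + h - 1) / h with hR
    have hRD : D ≤ h * R := by
      have hmod := Nat.div_add_mod (D + h - 1) h
      have hlt : (D + h - 1) % h < h := Nat.mod_lt _ (by omega)
      rw [← hR] at hmod
      omega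
    -- minimal feasible z''
    set Sset : Set ℕ := {r | ∃ z : Fin n → ℤ, (∀ i, z i = 0 ∨ z i = 1) ∧ H.mulVec z = b'' ∧
      (Finset.univ.filter (fun i => z i ≠ z' i)).card = r} with hSset
    obtain ⟨z₀, hz₀b, hz₀v⟩ := hfeas
    have hSne : Sset.Nonempty := ⟨_, z₀, hz₀b, hz₀v, rfl⟩
    obtain ⟨z'', hz''b, hz''v, hz''card⟩ := Nat.sInf_mem hSne
    have hmin : ∀ z : Fin n → ℤ, (∀ i, z i = 0 ∨ z i = 1) → H.mulVec z = b'' →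
        (Finset.univ.filter (fun i => z'' i ≠ z' i)).card ≤
          (Finset.univ.filter (fun i => z i ≠ z' i)).card := by
      intro z hzb hzv
      rw [hz''card]
      exact Nat.sInf_le ⟨z, hzb, hzv, rfl⟩
    set Δ : Fin k → ℤ := fun c => b'' c - b' c with hΔdef
    have hΔ : ∀ c, (H.mulVec z'') c - (H.mulVec z') c = Δ c := by
      intro c
      rw [hz''v, hHz', hΔdef]
    have hΔR : ∀ c, |Δ c| ≤ (h:ℤ) * R := by
      intro c
      have h1 : |Δ c| ≤ (D:ℤ) := by
        rw [hΔdef]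
        rw [abs_sub_comm]
        exact hDb c
      calc |Δ c| ≤ (D:ℤ) := h1
        _ ≤ ((h * R : ℕ) : ℤ) := by exact_mod_cast hRD
        _ = (h:ℤ) * R := by push_cast; ring
    have key := key_claim k n H b'' z' hz' h R hHb z'' hz''b hz''v hmin Δ hΔ hΔR
    refine ⟨z'', hz''b, hz''v, ?_⟩
    -- LHS = m
    set m := (Finset.univ.filter (fun i => z'' i ≠ z' i)).card with hm
    have hLHS : (∑ i, |z' i - z'' i| : ℤ) = (m : ℤ) := by
      have e1 : ∀ i, |z' i - z'' i| = if z'' i ≠ z' i then 1 else 0 := by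
        intro i
        rcases hz' i with h1|h1 <;> rcases hz''b i with h2|h2 <;> rw [h1, h2] <;>
          split_ifs with hif <;> simp_all
      rw [Finset.sum_congr rfl (fun i _ => e1 i), Finset.sum_boole, hm]
    rw [hLHS]
    -- ceiling comparison
    have hhr : (0:ℝ) < (h:ℝ) := by exact_mod_cast hh1
    have hceilR : (R:ℝ) ≤ ((⌈(D:ℝ)/(h:ℝ)⌉ : ℤ) : ℝ) := by
      have h1 : (R:ℤ) ≤ ⌈(D:ℝ)/(h:ℝ)⌉ := by
        rcases Nat.eq_zero_or_pos R with h0|h0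
        · rw [h0]
          exact_mod_cast Int.ceil_nonneg (by positivity)
        · have h3 : R * h ≤ D + h - 1 := Nat.div_mul_le_self _ _
          have hD1 : 1 ≤ D := by
            by_contra hcon
            push_neg at hcon
            interval_cases D
            · rw [hR] at h0
              have : (0 + h - 1) / h = 0 := Nat.div_eq_of_lt (by omega)
              omega
          have h4 : ((R:ℝ) - 1) * (h:ℝ) < (D:ℝ) := by
            have h6 : (R-1)*h ≤ D - 1 := by
              rw [Nat.sub_mul, one_mul]
              omega
            have h7 : (((R-1)*h : ℕ) : ℝ) ≤ ((D - 1 : ℕ) : ℝ) := by exact_mod_cast h6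
            have h8 : (((R-1) : ℕ):ℝ) = (R:ℝ) - 1 := by
              push_cast [Nat.cast_sub h0]
              ring
            have h9 : ((D - 1 : ℕ):ℝ) = (D:ℝ) - 1 := by
              push_cast [Nat.cast_sub hD1]
              ring
            rw [Nat.cast_mul, h8, h9] at h7
            linarith
          have h10 : ((R:ℤ) - 1 : ℤ) < ⌈(D:ℝ)/(h:ℝ)⌉ := by
            rw [Int.lt_ceil]
            push_cast
            rw [lt_div_iff₀ hhr]
            linarith
          omega
      exact_mod_cast h1
    -- final numeric chain
    have hkey2 : (m:ℝ) ≤ ((R:ℝ)+1) * (2 * (k:ℝ) * (h:ℝ) + 1)^k := by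
      have : (m + R + 1 : ℕ) ≤ ((R+1) * (2*k*h+1)^k : ℕ) := key
      have h2 : ((m + R + 1 : ℕ):ℝ) ≤ (((R+1) * (2*k*h+1)^k : ℕ):ℝ) := by exact_mod_cast this
      push_cast at h2
      linarith
    have hpow : (0:ℝ) ≤ (2 * (k:ℝ) * (h:ℝ) + 1)^k := by positivity
    calc ((m:ℤ):ℝ) = (m:ℝ) := by push_cast; rfl
      _ ≤ ((R:ℝ)+1) * (2 * (k:ℝ) * (h:ℝ) + 1)^k := hkey2
      _ ≤ (((⌈(D:ℝ)/(h:ℝ)⌉ : ℤ) : ℝ)+1) * (2 * (k:ℝ) * (h:ℝ) + 1)^k := by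
          apply mul_le_mul_of_nonneg_right _ hpow
          linarith
end

section
/- Let f(x) = g(Wx) with W ∈ ℤ^{m×n} and g convex with L-Lipschitz continuous gradients (meaning ‖∇g(u) − ∇g(v)‖_∞ ≤ L‖u − v‖₁ for all u,v). Suppose f admits δ-proximity with δ ≥ 1. Let x* ∈ [0,1]^n be a constrained continuous minimum of f with at most m fractional entries. Then there exists an integer minimum z* ∈ {0,1}^n of f over {0,1}^n such that for every index k: if (∇f(x*))_k > (δ−1)L then z*_k = 0, and if (∇f(x*))_k < −(δ−1)L then z*_k = 1. -/
/-!
If `∂ₖf(x*) > (δ - 1)L ≥ 0`, first-order optimality of `x*` on the cube forces `x*ₖ = 0`.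
Were `z*ₖ = 1` for the proximal integer minimum `z*`, moving that coordinate to `0` would give a
binary point `ẑ` with `‖x* - ẑ‖₁ ≤ δ - 1`, so `∂ₖf(ẑ) > 0` by the Lipschitz bound; convexity
then gives `f(z*) ≥ f(ẑ) + ∂ₖf(ẑ) > f(ẑ)`, contradicting the minimality of `z*`.
The other sign is symmetric.
-/

open Set

theorem ConvexOn.fderiv_apply_sub_le {E : Type*} [NormedAddCommGroup E] [NormedSpace ℝ E]
    {f : E → ℝ} (hf : ConvexOn ℝ univ f) {a : E} (hd : DifferentiableAt ℝ f a) (b : E) :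
    fderiv ℝ f a (b - a) ≤ f b - f a := by
  have hline : HasDerivAt (fun t : ℝ => a + t • (b - a)) (b - a) 0 := by
    simpa using ((hasDerivAt_id (0 : ℝ)).smul_const (b - a)).const_add a
  have hderiv : HasDerivAt (fun t : ℝ => f (a + t • (b - a))) (fderiv ℝ f a (b - a)) 0 :=
    hd.hasFDerivAt.comp_hasDerivAt_of_eq 0 hline (by simp)
  have hconv : ConvexOn ℝ univ (fun t : ℝ => f (a + t • (b - a))) := by
    simpa [Function.comp_def, AffineMap.lineMap_apply, add_comm] using
      hf.comp_affineMap (AffineMap.lineMap a b)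
  simpa [slope_def_field] using
    hconv.le_slope_of_hasDerivAt (mem_univ 0) (mem_univ 1) one_pos hderiv

theorem Function.update_sub_self_eq_smul_single {ι : Type*} [DecidableEq ι] (a : ι → ℝ) (k : ι)
    (c : ℝ) : Function.update a k c - a = (c - a k) • Pi.single k 1 := by
  ext i
  rcases eq_or_ne i k with rfl | hik
  · simp
  · simp [hik]

theorem ConvexOn.fderiv_single_mul_le {ι : Type*} [Fintype ι] [DecidableEq ι]
    {f : (ι → ℝ) → ℝ} (hf : ConvexOn ℝ univ f) {a : ι → ℝ} (hd : DifferentiableAt ℝ f a)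
    (k : ι) (c : ℝ) :
    fderiv ℝ f a (Pi.single k 1) * (c - a k) ≤ f (Function.update a k c) - f a := by
  simpa [Function.update_sub_self_eq_smul_single, mul_comm] using
    hf.fderiv_apply_sub_le hd (Function.update a k c)

theorem IsMinOn.fderiv_single_mul_nonneg {ι : Type*} [Fintype ι] [DecidableEq ι]
    {f : (ι → ℝ) → ℝ} {s : Set (ι → ℝ)} {a : ι → ℝ} (hmin : IsMinOn f s a) (hs : Convex ℝ s)
    (ha : a ∈ s) (hd : DifferentiableAt ℝ f a) {k : ι} {c : ℝ}
    (hc : Function.update a k c ∈ s) :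
    0 ≤ fderiv ℝ f a (Pi.single k 1) * (c - a k) := by
  have := hmin.localize.hasFDerivWithinAt_nonneg hd.hasFDerivAt.hasFDerivWithinAt
    (sub_mem_posTangentConeAt_of_segment_subset (hs.segment_subset ha hc))
  simpa [Function.update_sub_self_eq_smul_single, mul_comm] using this

theorem sum_abs_sub_update_add {ι : Type*} [Fintype ι] [DecidableEq ι] (x z : ι → ℝ) (k : ι) :
    ∑ i, |x i - Function.update z k (x k) i| + |x k - z k| = ∑ i, |x i - z i| := by
  rw [← Finset.add_sum_erase _ _ (Finset.mem_univ k),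
    ← Finset.add_sum_erase _ _ (Finset.mem_univ k)]
  have : ∀ i ∈ Finset.univ.erase k, |x i - Function.update z k (x k) i| = |x i - z i| :=
    fun i hi => by rw [Function.update_of_ne (Finset.ne_of_mem_erase hi)]
  rw [Finset.sum_congr rfl this]
  simp only [Function.update_self, sub_self, abs_zero]
  ring

theorem nonneg_of_abs_sub_le_mul_sum_abs {ι : Type*} [Fintype ι] [DecidableEq ι]
    {F : (ι → ℝ) → ℝ} {L : ℝ} (h : ∀ x y : ι → ℝ, |F x - F y| ≤ L * ∑ i, |x i - y i|) (k : ι) :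
    0 ≤ L := by
  simpa [Pi.single_apply, apply_ite] using (abs_nonneg _).trans (h 0 (Pi.single k 1))

theorem fderiv_single_mul_le_of_proximity {ι : Type*} [Fintype ι] [DecidableEq ι]
    {f : (ι → ℝ) → ℝ} {L δ : ℝ} (hf : ConvexOn ℝ univ f) (hd : Differentiable ℝ f)
    (hL : 0 ≤ L)
    (hLip : ∀ x y : ι → ℝ, ∀ k : ι,
      |fderiv ℝ f x (Pi.single k 1) - fderiv ℝ f y (Pi.single k 1)| ≤ L * ∑ i, |x i - y i|)
    {x z : ι → ℝ} (hz01 : ∀ i, z i = 0 ∨ z i = 1)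
    (hzmin : ∀ y : ι → ℝ, (∀ i, y i = 0 ∨ y i = 1) → f z ≤ f y)
    (hxz : ∑ i, |x i - z i| ≤ δ) {k : ι} (hxk : x k = 0 ∨ x k = 1) (hne : z k ≠ x k) :
    fderiv ℝ f x (Pi.single k 1) * (z k - x k) ≤ (δ - 1) * L := by
  set a := Function.update z k (x k)
  have hunit : |z k - x k| = 1 := by
    rcases hz01 k with h | h <;> rcases hxk with h' | h' <;> simp_all
  have hdist : ∑ i, |x i - a i| + 1 = ∑ i, |x i - z i| := by
    rw [← sum_abs_sub_update_add x z k, abs_sub_comm, hunit]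
  have hflip : fderiv ℝ f a (Pi.single k 1) * (z k - x k) ≤ 0 := by
    have ha01 : ∀ i, a i = 0 ∨ a i = 1 := fun i => by
      rcases eq_or_ne i k with rfl | hik
      · simpa [a] using hxk
      · simpa [a, hik] using hz01 i
    have := hf.fderiv_single_mul_le (hd a) k (z k)
    simp only [a, Function.update_idem, Function.update_eq_self, Function.update_self] at this
    linarith [hzmin a ha01]
  have hgap : (fderiv ℝ f x (Pi.single k 1) - fderiv ℝ f a (Pi.single k 1)) * (z k - x k)
      ≤ (δ - 1) * L := by
    calc _ ≤ |fderiv ℝ f x (Pi.single k 1) - fderiv ℝ f a (Pi.single k 1)| := by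
          simpa [abs_mul, hunit] using le_abs_self
            ((fderiv ℝ f x (Pi.single k 1) - fderiv ℝ f a (Pi.single k 1)) * (z k - x k))
      _ ≤ L * ∑ i, |x i - a i| := hLip x a k
      _ ≤ (δ - 1) * L := by nlinarith
  linarith

/-- Small gradients lemma: large coordinates of the gradient at a fractional
minimum force the corresponding coordinates of some integral minimum. -/
theorem stmt6 (m n : ℕ) (W : Matrix (Fin m) (Fin n) ℤ) (g : (Fin m → ℝ) → ℝ)
    (L δ : ℝ) (hδ : 1 ≤ δ)
    (f : (Fin n → ℝ) → ℝ)
    (hf : f = fun x => g ((W.map (fun a => (a:ℝ))).mulVec x))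
    (hconv : ConvexOn ℝ Set.univ g) (hdiff : Differentiable ℝ f)
    (hLip : ∀ x y : Fin n → ℝ, ∀ k : Fin n,
      |fderiv ℝ f x (Pi.single k 1) - fderiv ℝ f y (Pi.single k 1)| ≤ L * ∑ i, |x i - y i|)
    (hprox : ∀ x : Fin n → ℝ, (∀ i, x i ∈ Set.Icc (0:ℝ) 1) →
      (∀ y : Fin n → ℝ, (∀ i, y i ∈ Set.Icc (0:ℝ) 1) → f x ≤ f y) →
      Set.ncard {i | x i ≠ 0 ∧ x i ≠ 1} ≤ m →
      ∃ z : Fin n → ℝ, (∀ i, z i = 0 ∨ z i = 1) ∧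
        (∀ y : Fin n → ℝ, (∀ i, y i = 0 ∨ y i = 1) → f z ≤ f y) ∧
        ∑ i, |x i - z i| ≤ δ)
    (xs : Fin n → ℝ) (hxs : ∀ i, xs i ∈ Set.Icc (0:ℝ) 1)
    (hmin : ∀ y : Fin n → ℝ, (∀ i, y i ∈ Set.Icc (0:ℝ) 1) → f xs ≤ f y)
    (hfrac : Set.ncard {i | xs i ≠ 0 ∧ xs i ≠ 1} ≤ m) :
    ∃ z : Fin n → ℝ, (∀ i, z i = 0 ∨ z i = 1) ∧
      (∀ y : Fin n → ℝ, (∀ i, y i = 0 ∨ y i = 1) → f z ≤ f y) ∧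
      ∀ k : Fin n,
        ((δ - 1) * L < fderiv ℝ f xs (Pi.single k 1) → z k = 0) ∧
        (fderiv ℝ f xs (Pi.single k 1) < -((δ - 1) * L) → z k = 1) := by
  have hfconv : ConvexOn ℝ univ f := by
    simpa [hf, Function.comp_def] using hconv.comp_linearMap (W.map (fun a => (a : ℝ))).mulVecLin
  obtain ⟨z, hz01, hzmin, hxz⟩ := hprox xs hxs hmin hfrac
  refine ⟨z, hz01, hzmin, fun k => ?_⟩
  have hL : 0 ≤ L := nonneg_of_abs_sub_le_mul_sum_abs (hLip · · k) k
  have hδL : 0 ≤ (δ - 1) * L := mul_nonneg (by linarith) hL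
  have hfirst (c : ℝ) (hc : c ∈ Icc 0 1) : 0 ≤ fderiv ℝ f xs (Pi.single k 1) * (c - xs k) :=
    IsMinOn.fderiv_single_mul_nonneg (s := univ.pi fun _ => Icc 0 1)
    (fun y hy => hmin y (mem_univ_pi.1 hy)) (convex_pi fun _ _ => convex_Icc 0 1)
    (mem_univ_pi.2 hxs) (hdiff xs)
    (mem_univ_pi.2 <| (Function.forall_update_iff _ (p := fun _ v => v ∈ Icc 0 1)).2
      ⟨hc, fun i _ => hxs i⟩)
  have hgap := fderiv_single_mul_le_of_proximity hfconv hdiff hL hLip hz01 hzmin hxz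
    (k := k)
  constructor
  · intro hpos
    have hxk : xs k = 0 := by nlinarith [hfirst 0 (by simp), (hxs k).1]
    by_contra hne
    have hzk : z k = 1 := (hz01 k).resolve_left hne
    nlinarith [hgap (.inl hxk) (by simp [hxk, hzk])]
  · intro hneg
    have hxk : xs k = 1 := by nlinarith [hfirst 1 (by simp), (hxs k).2]
    by_contra hne
    have hzk : z k = 0 := (hz01 k).resolve_right hne
    nlinarith [hgap (.inr hxk) (by simp [hxk, hzk])]
end

section
/- Let g(v) = ∑_{i=1}^m g_i(v_i) be separable convex with each g_i: ℝ → ℝ convex, and W ∈ ℤ^{m×n}. Then f(x) = g(Wx) admits δ-proximity with δ ≤ 2m(2m‖W‖_∞ + 1)^m; i.e., for every minimizer x* of f over [0,1]^n with at most m fractional entries there exists a minimizer z* of f over {0,1}^n with ‖x* − z*‖₁ ≤ 2m(2m‖W‖_∞ + 1)^m. -/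
/-!
Let `z` be a 0/1 minimizer of `f` that is closest to `x*` in `ℓ₁`. In standard form the vector
`u = (z - x*, W (z - x*))` lies in the kernel of `[W | -1]` and has at most `2m` non-integral
entries. Split `u` into `⌊|uᵢ|⌋` signed copies of the `i`-th column plus one fractional copy for
each non-integral entry. By the Steinitz lemma (Grinberg–Sevastyanov, constant `m` in the sup norm) these
vectors can be ordered so that all prefix sums lie in `[-m‖W‖∞, m‖W‖∞]ᵐ`. If `‖x* - z‖₁` exceeded
`2m (2m‖W‖∞ + 1)ᵐ`, two prefixes would share the ceilings of their sums and the number of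
fractional copies they contain (modulo the total number of fractional copies). Their difference
is then a nonempty collection of integral copies with zero sum, that is, a nonzero integer kernel
vector `c` conformal to `u`. Separable convexity gives `f (x* + c) + f (z - c) ≤ f x* + f z`, so
`z - c` is a 0/1 minimizer strictly closer to `x*`.
-/

open Finset Module Matrix

theorem ConvexOn.map_add_map_le_of_add_eq {φ : ℝ → ℝ} (hφ : ConvexOn ℝ Set.univ φ) {p q x y : ℝ}
    (hpx : p ≤ x) (hxq : x ≤ q) (hsum : x + y = p + q) : φ x + φ y ≤ φ p + φ q := by
  rcases (hpx.trans hxq).eq_or_lt with rfl | hpq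
  · obtain rfl : x = p := le_antisymm hxq hpx
    obtain rfl : y = x := by linarith
    rfl
  set θ := (x - p) / (q - p)
  have hθ₀ : 0 ≤ θ := div_nonneg (by linarith) (by linarith)
  have hθ₁ : θ ≤ 1 := (div_le_one (by linarith)).2 (by linarith)
  have hx : (1 - θ) • p + θ • q = x := by
    simp only [smul_eq_mul, θ]; field_simp; ring
  have hy : θ • p + (1 - θ) • q = y := by
    simp only [smul_eq_mul, θ]; field_simp; linear_combination (p - q) * hsum
  have h₁ := hφ.2 (Set.mem_univ p) (Set.mem_univ q) (sub_nonneg.2 hθ₁) hθ₀ (sub_add_cancel 1 θ)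
  have h₂ := hφ.2 (Set.mem_univ p) (Set.mem_univ q) hθ₀ (sub_nonneg.2 hθ₁) (add_sub_cancel θ 1)
  rw [hx] at h₁
  rw [hy] at h₂
  simp only [smul_eq_mul] at h₁ h₂
  linarith

theorem ConvexOn.map_add_add_le {φ : ℝ → ℝ} (hφ : ConvexOn ℝ Set.univ φ) (t : ℝ) {a b : ℝ}
    (hab : 0 ≤ a * b) : φ (t + a) + φ (t + b) ≤ φ t + φ (t + a + b) := by
  rcases mul_nonneg_iff.1 hab with ⟨ha, hb⟩ | ⟨ha, hb⟩
  · exact hφ.map_add_map_le_of_add_eq (by linarith) (by linarith) (by ring)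
  · rw [add_comm (φ t)]
    exact hφ.map_add_map_le_of_add_eq (by linarith) (by linarith) (by ring)

theorem sum_map_add_add_le {ι : Type*} [Fintype ι] {g : ι → ℝ → ℝ}
    (hg : ∀ j, ConvexOn ℝ Set.univ (g j)) (t a b : ι → ℝ) (hab : ∀ j, 0 ≤ a j * b j) :
    ∑ j, g j (t j + a j) + ∑ j, g j (t j + b j) ≤ ∑ j, g j (t j) + ∑ j, g j (t j + a j + b j) := by
  simp only [← Finset.sum_add_distrib]
  exact Finset.sum_le_sum fun j _ => (hg j).map_add_add_le (t j) (hab j)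

theorem sum_map_mulVec_add_add_le {ι κ : Type*} [Fintype ι] [Fintype κ] {g : ι → ℝ → ℝ}
    (hg : ∀ j, ConvexOn ℝ Set.univ (g j)) (M : Matrix ι κ ℝ) (x z c : κ → ℝ)
    (hc : ∀ j, 0 ≤ (M *ᵥ c) j * ((M *ᵥ (z - x)) j - (M *ᵥ c) j)) :
    ∑ j, g j ((M *ᵥ (x + c)) j) + ∑ j, g j ((M *ᵥ (z - c)) j) ≤
      ∑ j, g j ((M *ᵥ x) j) + ∑ j, g j ((M *ᵥ z) j) := by
  convert sum_map_add_add_le hg (M *ᵥ x) (M *ᵥ c) (M *ᵥ (z - x) - M *ᵥ c) hc using 4 <;>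
    simp only [Matrix.mulVec_add, Matrix.mulVec_sub, Pi.add_apply, Pi.sub_apply] <;> ring

section Fractional

variable {ι F : Type*} [Fintype ι] [AddCommGroup F] [Module ℝ F]
  [FiniteDimensional ℝ F]

noncomputable def fracSupport (x : ι → ℝ) : Finset ι := {i | x i ≠ 0 ∧ x i ≠ 1}

@[simp]
theorem mem_fracSupport {x : ι → ℝ} {i : ι} : i ∈ fracSupport x ↔ x i ≠ 0 ∧ x i ≠ 1 := by
  simp [fracSupport]

theorem exists_ne_zero_map_eq_zero_of_finrank_lt_card (L : (ι → ℝ) →ₗ[ℝ] F) (G : Finset ι)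
    (hG : finrank ℝ F < #G) : ∃ μ : ι → ℝ, μ ≠ 0 ∧ L μ = 0 ∧ ∀ i ∉ G, μ i = 0 := by
  let ext := Function.ExtendByZero.linearMap ℝ (Subtype.val : G → ι)
  have hker : LinearMap.ker (L ∘ₗ ext) ≠ ⊥ :=
    LinearMap.ker_ne_bot_of_finrank_lt (by simpa [finrank_fintype_fun_eq_card] using hG)
  obtain ⟨g, hg, hg0⟩ := (Submodule.ne_bot_iff _).1 hker
  refine ⟨ext g, fun h => hg0 ?_, hg, fun i hi => ?_⟩
  · ext j
    simpa [ext, Subtype.val_injective.extend_apply] using congrFun h j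
  · exact Function.extend_apply' _ _ _ fun ⟨j, hj⟩ => hi (hj ▸ j.2)

theorem exists_pos_forall_abs_lt_add_mul_mem_Icc {y μ : ι → ℝ}
    (hy : ∀ i, y i ∈ Set.Icc (0 : ℝ) 1) (hμ : ∀ i ∉ fracSupport y, μ i = 0) :
    ∃ ε > 0, ∀ t : ℝ, |t| < ε → ∀ i, y i + t * μ i ∈ Set.Icc (0 : ℝ) 1 := by
  set U : Set (ι → ℝ) := (fracSupport y : Set ι).pi fun _ => Set.Ioo 0 1
  have hU : IsOpen ((fun t : ℝ => y + t • μ) ⁻¹' U) :=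
    (isOpen_set_pi (fracSupport y).finite_toSet fun _ _ => isOpen_Ioo).preimage (by fun_prop)
  have h0 : (0 : ℝ) ∈ (fun t : ℝ => y + t • μ) ⁻¹' U := fun i hi => by
    rw [mem_coe, mem_fracSupport] at hi
    simpa using ⟨(hy i).1.lt_of_ne' hi.1, (hy i).2.lt_of_ne hi.2⟩
  obtain ⟨ε, hε, hball⟩ := Metric.isOpen_iff.1 hU 0 h0
  refine ⟨ε, hε, fun t ht i => ?_⟩
  by_cases hi : i ∈ fracSupport y
  · exact Set.Ioo_subset_Icc_self (hball (by simpa using ht) i hi)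
  · simpa [hμ i hi] using hy i

theorem exists_card_fracSupport_le_finrank (L : (ι → ℝ) →ₗ[ℝ] F) {x : ι → ℝ}
    (hx : ∀ i, x i ∈ Set.Icc (0 : ℝ) 1) :
    ∃ y : ι → ℝ, (∀ i, y i ∈ Set.Icc (0 : ℝ) 1) ∧ L y = L x ∧
      (∀ i, x i = 0 ∨ x i = 1 → y i = x i) ∧ #(fracSupport y) ≤ finrank ℝ F := by
  set P : Set (ι → ℝ) := Set.pi Set.univ (fun _ => Set.Icc 0 1) ∩
    Set.pi {i | x i = 0 ∨ x i = 1} (fun i => {x i}) ∩ L ⁻¹' {L x}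
  have hPclosed : IsClosed (L ⁻¹' {L x}) := by
    have : L ⁻¹' {L x} = (· - x) ⁻¹' (LinearMap.ker L : Set (ι → ℝ)) := by
      ext y; simp [sub_eq_zero]
    rw [this]
    exact (LinearMap.ker L).closed_of_finiteDimensional.preimage (continuous_sub_right x)
  have hPcompact : IsCompact P :=
    ((isCompact_univ_pi fun _ => isCompact_Icc).inter_right
      (isClosed_set_pi fun _ _ => isClosed_singleton)).inter_right hPclosed
  obtain ⟨y, hy⟩ := hPcompact.extremePoints_nonempty ⟨x, ⟨fun i _ => hx i, fun i _ => rfl⟩, rfl⟩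
  obtain ⟨⟨⟨hy01, hyx⟩, hLy⟩, hyext⟩ := mem_extremePoints.1 hy
  refine ⟨y, fun i => hy01 i trivial, hLy, fun i hi => hyx i hi, ?_⟩
  -- otherwise a kernel direction supported on the fractional coordinates of `y` moves `y` both
  -- ways inside `P`, contradicting extremality
  by_contra! hcard
  obtain ⟨μ, hμ0, hLμ, hμG⟩ := exists_ne_zero_map_eq_zero_of_finrank_lt_card L _ hcard
  obtain ⟨ε, hε, hsmall⟩ := exists_pos_forall_abs_lt_add_mul_mem_Icc (fun i => hy01 i trivial) hμG
  have hmem : ∀ t : ℝ, |t| < ε → y + t • μ ∈ P := by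
    intro t ht
    refine ⟨⟨fun i _ => hsmall t ht i, fun i (hi : x i = 0 ∨ x i = 1) => ?_⟩,
      by simpa [hLμ] using hLy⟩
    have hyi : y i = x i := hyx i hi
    have : i ∉ fracSupport y := by
      rw [mem_fracSupport, hyi]
      tauto
    simpa [hμG i this] using hyi
  have hδ : |ε / 2| < ε := by rw [abs_of_pos (half_pos hε)]; exact half_lt_self hε
  have hseg : y ∈ openSegment ℝ (y + (ε / 2) • μ) (y + (-(ε / 2)) • μ) :=
    ⟨1 / 2, 1 / 2, by norm_num, by norm_num, by norm_num, by module⟩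
  have := (hyext _ (hmem _ hδ) _ (hmem _ (by rwa [abs_neg])) hseg).1
  exact hμ0 (smul_eq_zero.1 (add_eq_left.1 this) |>.resolve_left (half_pos hε).ne')

theorem exists_mem_eq_zero_of_card_fracSupport_le {S : Finset ι} {w : ι → ℝ} {r : ℕ}
    (hr : 0 < r) (hw : ∀ i, w i ∈ Set.Icc (0 : ℝ) 1) (hS : ∀ i ∉ S, w i = 0)
    (hsum : ∑ i, w i = #S - r) (hfrac : #(fracSupport w) ≤ r) : ∃ j ∈ S, w j = 0 := by
  by_contra! hpos
  have hfS : fracSupport w ⊆ S := fun i hi => by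
    by_contra hiS
    exact (mem_fracSupport.1 hi).1 (hS i hiS)
  -- the deficit `∑ i ∈ S, (1 - w i) = r` comes only from the fractional coordinates
  have hdeficit : ∑ i ∈ S, (1 - w i) = ∑ i ∈ fracSupport w, (1 - w i) := by
    refine (sum_subset hfS fun i hiS hi => ?_).symm
    have : w i = 1 := by simpa [hpos i hiS] using hi
    simp [this]
  rw [sum_sub_distrib, sum_const, nsmul_one, sum_subset (subset_univ S) fun i _ hi => hS i hi,
    hsum, sub_sub_cancel] at hdeficit
  rcases (fracSupport w).eq_empty_or_nonempty with he | hne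
  · simp only [he, sum_empty, Nat.cast_eq_zero] at hdeficit
    omega
  · have := sum_lt_sum_of_nonempty hne fun i hi =>
      show 1 - w i < 1 by linarith [(hw i).1.lt_of_ne' (hpos i (hfS hi))]
    simp only [sum_const, nsmul_one] at this
    have : (#(fracSupport w) : ℝ) ≤ r := by exact_mod_cast hfrac
    linarith

end Fractional

section Steinitz

variable {ι E : Type*} [Fintype ι] [NormedAddCommGroup E] [NormedSpace ℝ E]

/-- Grinberg–Sevastyanov weights: they give `∑ i ∈ S, v i = ∑ i ∈ S, (1 - w i) • v i`, where the
coefficients `1 - w i ∈ [0, 1]` add up to `finrank ℝ E`. -/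
structure IsSteinitzWeight (v : ι → E) (S : Finset ι) (w : ι → ℝ) : Prop where
  mem_Icc : ∀ i, w i ∈ Set.Icc (0 : ℝ) 1
  eq_zero_of_notMem : ∀ i ∉ S, w i = 0
  sum_eq : ∑ i, w i = #S - finrank ℝ E
  sum_smul_eq_zero : ∑ i, w i • v i = 0

variable {v : ι → E} {S : Finset ι} {w : ι → ℝ} {Δ : ℝ}

theorem IsSteinitzWeight.norm_sum_le (h : IsSteinitzWeight v S w) (hv : ∀ i, ‖v i‖ ≤ Δ) :
    ‖∑ i ∈ S, v i‖ ≤ finrank ℝ E * Δ := by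
  have hsupp : ∀ f : ι → E, (∀ i ∉ S, f i = 0) → ∑ i ∈ S, f i = ∑ i, f i := fun f hf =>
    sum_subset (subset_univ S) fun i _ hi => hf i hi
  have hw : ∑ i ∈ S, w i = #S - finrank ℝ E := by
    rw [← h.sum_eq]
    exact sum_subset (subset_univ S) fun i _ hi => h.eq_zero_of_notMem i hi
  have hrepr : ∑ i ∈ S, v i = ∑ i ∈ S, (1 - w i) • v i := by
    simp only [sub_smul, one_smul, sum_sub_distrib]
    rw [hsupp (fun i => w i • v i) fun i hi => by simp [h.eq_zero_of_notMem i hi],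
      h.sum_smul_eq_zero, sub_zero]
  calc ‖∑ i ∈ S, v i‖ = ‖∑ i ∈ S, (1 - w i) • v i‖ := by rw [hrepr]
    _ ≤ ∑ i ∈ S, ‖(1 - w i) • v i‖ := _root_.norm_sum_le _ _
    _ ≤ ∑ i ∈ S, (1 - w i) * Δ := by
      refine sum_le_sum fun i _ => ?_
      rw [norm_smul, Real.norm_of_nonneg (sub_nonneg.2 (h.mem_Icc i).2)]
      exact mul_le_mul_of_nonneg_left (hv i) (sub_nonneg.2 (h.mem_Icc i).2)
    _ = finrank ℝ E * Δ := by
      rw [← sum_mul, sum_sub_distrib, hw]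
      simp

theorem IsSteinitzWeight.exists_erase [DecidableEq ι] [FiniteDimensional ℝ E]
    (h : IsSteinitzWeight v S w) (hS : finrank ℝ E < #S) :
    ∃ j ∈ S, ∃ w', IsSteinitzWeight v (S.erase j) w' := by
  set d := finrank ℝ E
  have hdS : (d : ℝ) + 1 ≤ #S := by exact_mod_cast hS
  -- lower the total weight by one, then pass to a point with at most `d + 1` fractional
  -- coordinates (one linear constraint for the total weight, `d` for `∑ i, w i • v i = 0`)
  set c : ℝ := (#S - 1 - d) / (#S - d)
  have hc₀ : 0 ≤ c := div_nonneg (by linarith) (by linarith)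
  have hc₁ : c ≤ 1 := (div_le_one (by linarith)).2 (by linarith)
  let L := Fintype.linearCombination ℝ fun i => ((1 : ℝ), v i)
  have hL : ∀ u, L u = (∑ i, u i, ∑ i, u i • v i) := fun u => by
    simp [L, Fintype.linearCombination_apply, Prod.ext_iff, Prod.fst_sum, Prod.snd_sum]
  obtain ⟨w', hw'01, hLw', hw'fix, hfrac⟩ := exists_card_fracSupport_le_finrank L
    (x := c • w) fun i => ⟨mul_nonneg hc₀ (h.mem_Icc i).1,
      mul_le_one₀ hc₁ (h.mem_Icc i).1 (h.mem_Icc i).2⟩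
  rw [hL, hL, Prod.mk.injEq] at hLw'
  obtain ⟨hsum, hsmul⟩ := hLw'
  simp only [Pi.smul_apply, smul_eq_mul, ← mul_sum, mul_smul, ← smul_sum, h.sum_eq,
    h.sum_smul_eq_zero, smul_zero] at hsum hsmul
  have hsum' : ∑ i, w' i = #S - 1 - d := by
    have : (#S : ℝ) - d ≠ 0 := by linarith
    rw [hsum]
    exact div_mul_cancel₀ _ this
  have hzero : ∀ i ∉ S, w' i = 0 := fun i hi => by
    simpa [h.eq_zero_of_notMem i hi] using hw'fix i (by simp [h.eq_zero_of_notMem i hi])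
  obtain ⟨j, hjS, hj⟩ := exists_mem_eq_zero_of_card_fracSupport_le (r := d + 1) d.succ_pos
    hw'01 hzero (by rw [hsum']; push_cast; ring) (by simpa [finrank_prod, add_comm] using hfrac)
  refine ⟨j, hjS, w', hw'01, fun i hi => ?_, ?_, hsmul⟩
  · rcases eq_or_ne i j with rfl | hij
    · exact hj
    · exact hzero i fun hiS => hi (mem_erase.2 ⟨hij, hiS⟩)
  · rw [hsum', card_erase_of_mem hjS, Nat.cast_sub (one_le_card.2 ⟨j, hjS⟩), Nat.cast_one]

theorem norm_sum_le_of_exists_isSteinitzWeight (hΔ : 0 ≤ Δ) (hv : ∀ i, ‖v i‖ ≤ Δ)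
    (hS : finrank ℝ E ≤ #S → ∃ w, IsSteinitzWeight v S w) :
    ‖∑ i ∈ S, v i‖ ≤ finrank ℝ E * Δ := by
  by_cases hdS : finrank ℝ E ≤ #S
  · obtain ⟨w, hw⟩ := hS hdS
    exact hw.norm_sum_le hv
  calc ‖∑ i ∈ S, v i‖ ≤ ∑ i ∈ S, ‖v i‖ := norm_sum_le _ _
    _ ≤ #S * Δ := by simpa using sum_le_sum fun i (_ : i ∈ S) => hv i
    _ ≤ finrank ℝ E * Δ := by gcongr; exact_mod_cast (not_le.1 hdS).le

theorem exists_chain_of_exists_isSteinitzWeight [DecidableEq ι] [FiniteDimensional ℝ E]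
    (hΔ : 0 ≤ Δ) (hv : ∀ i, ‖v i‖ ≤ Δ) (S : Finset ι)
    (hS : finrank ℝ E ≤ #S → ∃ w, IsSteinitzWeight v S w) :
    ∃ A : ℕ → Finset ι, Monotone A ∧ (∀ k ≤ #S, #(A k) = k) ∧ (∀ k, A k ⊆ S) ∧
      ∀ k, ‖∑ i ∈ A k, v i‖ ≤ finrank ℝ E * Δ := by
  induction hn : #S generalizing S with
  | zero =>
    refine ⟨fun _ => ∅, monotone_const, fun k hk => by simp_all, fun _ => empty_subset _,
      fun _ => by simpa using mul_nonneg (Nat.cast_nonneg _) hΔ⟩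
  | succ n ih =>
    obtain ⟨j, hjS, hj⟩ : ∃ j ∈ S, finrank ℝ E ≤ #(S.erase j) →
        ∃ w, IsSteinitzWeight v (S.erase j) w := by
      by_cases hdS : finrank ℝ E < #S
      · obtain ⟨w, hw⟩ := hS hdS.le
        obtain ⟨j, hjS, w', hw'⟩ := hw.exists_erase hdS
        exact ⟨j, hjS, fun _ => ⟨w', hw'⟩⟩
      · obtain ⟨j, hjS⟩ := card_pos.1 (show 0 < #S by omega)
        refine ⟨j, hjS, fun h => absurd h ?_⟩
        rw [card_erase_of_mem hjS]
        omega
    obtain ⟨A, hAmono, hAcard, hAsub, hAnorm⟩ :=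
      ih (S.erase j) hj (by rw [card_erase_of_mem hjS, hn, Nat.add_sub_cancel])
    refine ⟨fun k => if k ≤ n then A k else S, monotone_nat_of_le_succ fun k => ?_,
      fun k hk => ?_, fun k => ?_, fun k => ?_⟩
    · by_cases hk : k + 1 ≤ n
      · simpa [hk, show k ≤ n by omega] using hAmono k.le_succ
      · by_cases hk' : k ≤ n
        · simpa [hk, hk'] using (hAsub k).trans (erase_subset j S)
        · simp [hk, hk']
    · by_cases hkn : k ≤ n
      · simpa [hkn] using hAcard k hkn
      · simp only [hkn, if_false, hn]
        omega
    · dsimp only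
      split_ifs
      exacts [(hAsub k).trans (erase_subset j S), subset_rfl]
    · dsimp only
      split_ifs
      exacts [hAnorm k, norm_sum_le_of_exists_isSteinitzWeight hΔ hv hS]

theorem exists_monotone_chain_norm_sum_le [DecidableEq ι] [FiniteDimensional ℝ E] (hΔ : 0 ≤ Δ)
    (hv : ∀ i, ‖v i‖ ≤ Δ) (hsum : ∑ i, v i = 0) :
    ∃ A : ℕ → Finset ι, Monotone A ∧ (∀ k ≤ Fintype.card ι, #(A k) = k) ∧
      ∀ k, ‖∑ i ∈ A k, v i‖ ≤ finrank ℝ E * Δ := by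
  have huniv : finrank ℝ E ≤ #(univ : Finset ι) → ∃ w, IsSteinitzWeight v univ w := by
    intro hd
    rw [card_univ] at hd
    have hdT : (finrank ℝ E : ℝ) ≤ Fintype.card ι := by exact_mod_cast hd
    refine ⟨fun _ => (Fintype.card ι - finrank ℝ E) / Fintype.card ι, ⟨fun _ => ⟨?_, ?_⟩,
      fun i hi => absurd (Finset.mem_univ i) hi, ?_, by rw [← smul_sum, hsum, smul_zero]⟩⟩
    · exact div_nonneg (by linarith) (Nat.cast_nonneg _)
    · exact div_le_one_of_le₀ (by linarith) (Nat.cast_nonneg _)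
    · rcases Nat.eq_zero_or_pos (Fintype.card ι) with hT | hT
      · simp [hT, show finrank ℝ E = 0 by omega]
      · simp only [sum_const, card_univ, nsmul_eq_mul]
        field_simp
  obtain ⟨A, hmono, hcard, -, hnorm⟩ := exists_chain_of_exists_isSteinitzWeight hΔ hv univ huniv
  exact ⟨A, hmono, by simpa using hcard, hnorm⟩

end Steinitz

section Pigeonhole

def integerPoints (κ : Type*) : AddSubgroup (κ → ℝ) := ((Int.castAddHom ℝ).compLeft κ).range

variable {κ : Type*}

theorem mem_integerPoints {x : κ → ℝ} : x ∈ integerPoints κ ↔ ∀ j, ∃ k : ℤ, x j = k :=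
  ⟨fun ⟨w, hw⟩ j => ⟨w j, hw ▸ rfl⟩,
    fun h => ⟨fun j => (h j).choose, funext fun j => (h j).choose_spec.symm⟩⟩

theorem eq_of_sub_mem_integerPoints_of_ceil_eq {p q : κ → ℝ} (h : p - q ∈ integerPoints κ)
    (hceil : ∀ j, ⌈p j⌉ = ⌈q j⌉) : p = q := by
  funext j
  obtain ⟨k, hk⟩ := mem_integerPoints.1 h j
  have hp : p j = q j + k := by simpa [sub_eq_iff_eq_add'] using hk
  have := hceil j
  rw [hp, Int.ceil_add_intCast] at this
  simp [hp, show k = 0 by omega]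

theorem disjoint_sdiff_or_of_card_inter_mod_eq [DecidableEq κ] {K L F : Finset κ} (hKL : K ⊆ L)
    (h : #(K ∩ F) % #F = #(L ∩ F) % #F) : Disjoint (L \ K) F ∨ (Disjoint K F ∧ F ⊆ L) := by
  have hKF : K ∩ F ⊆ L ∩ F := inter_subset_inter_right hKL
  have hle := card_le_card hKF
  have hLF : #(L ∩ F) ≤ #F := card_le_card inter_subset_right
  by_cases heq : #(K ∩ F) = #(L ∩ F)
  · left
    have := eq_of_subset_of_card_le hKF heq.ge
    rw [disjoint_iff_inter_eq_empty, eq_empty_iff_forall_notMem]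
    intro i hi
    obtain ⟨⟨hiL, hiK⟩, hiF⟩ := by simpa using hi
    exact hiK (mem_inter.1 (this ▸ mem_inter.2 ⟨hiL, hiF⟩)).1
  · right
    rcases hLF.eq_or_lt with hLF' | hLF'
    · rw [hLF', Nat.mod_self, Nat.mod_eq_of_lt (by omega)] at h
      exact ⟨disjoint_iff_inter_eq_empty.2 (card_eq_zero.1 h),
        inter_eq_right.1 (eq_of_subset_of_card_le inter_subset_right hLF'.ge)⟩
    · rw [Nat.mod_eq_of_lt hLF', Nat.mod_eq_of_lt (by omega)] at h
      exact absurd h heq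

theorem exists_nonempty_disjoint_sum_eq_sub_or_sub [Fintype κ] [DecidableEq κ] {M : Type*}
    [AddCommGroup M] (v : κ → M) (hsum : ∑ i, v i = 0) {K L F : Finset κ} (hKL : K ⊆ L)
    (hK : K.Nonempty) (hcard : #K < #L) (hmod : #(K ∩ F) % #F = #(L ∩ F) % #F) :
    ∃ B : Finset κ, B.Nonempty ∧ Disjoint B F ∧
      (∑ i ∈ B, v i = ∑ i ∈ L, v i - ∑ i ∈ K, v i ∨
        ∑ i ∈ B, v i = ∑ i ∈ K, v i - ∑ i ∈ L, v i) := by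
  rcases disjoint_sdiff_or_of_card_inter_mod_eq hKL hmod with hdisj | ⟨hKF, hFL⟩
  · refine ⟨L \ K, ?_, hdisj, .inl (sum_sdiff_eq_sub hKL)⟩
    rw [← card_pos, card_sdiff_of_subset hKL]
    omega
  · refine ⟨K ∪ Lᶜ, hK.mono subset_union_left,
      disjoint_union_left.2 ⟨hKF, disjoint_compl_left_iff.2 hFL⟩, .inr ?_⟩
    have hcompl := sum_compl_add_sum L v
    rw [hsum] at hcompl
    rw [sum_union (disjoint_compl_right_iff.2 hKL), eq_neg_of_add_eq_zero_left hcompl,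
      sub_eq_add_neg]

theorem ceil_mem_piFinset_Icc {m R : ℕ} {p : Fin m → ℝ} (hp : ‖p‖ ≤ R) :
    (fun j => ⌈p j⌉) ∈ Fintype.piFinset fun _ : Fin m => Icc (-(R : ℤ)) R := by
  refine Fintype.mem_piFinset.2 fun j => mem_Icc.2 ⟨Int.le_ceil_iff.2 ?_, Int.ceil_le.2 ?_⟩ <;>
    push_cast <;> linarith [abs_le.1 ((norm_le_pi_norm p j).trans hp)]

theorem card_piFinset_Icc (m R : ℕ) :
    #(Fintype.piFinset fun _ : Fin m => Icc (-(R : ℤ)) R) = (2 * R + 1) ^ m := by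
  rw [Fintype.card_piFinset, prod_const, card_univ, Fintype.card_fin, Int.card_Icc,
    show (R + 1 - -(R : ℤ)) = ((2 * R + 1 : ℕ) : ℤ) by push_cast; ring, Int.toNat_natCast]

theorem exists_nonempty_disjoint_sum_eq_zero [Fintype κ] [DecidableEq κ] {m Δ : ℕ}
    (v : κ → Fin m → ℝ) (hv : ∀ i, ‖v i‖ ≤ Δ) (hsum : ∑ i, v i = 0) (F : Finset κ)
    (hint : ∀ i ∉ F, v i ∈ integerPoints (Fin m))
    (hcard : #F * (2 * m * Δ + 1) ^ m < Fintype.card κ) :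
    ∃ B : Finset κ, B.Nonempty ∧ Disjoint B F ∧ ∑ i ∈ B, v i = 0 := by
  set T := Fintype.card κ
  rcases F.eq_empty_or_nonempty with rfl | hF
  · exact ⟨univ, univ_nonempty_iff.2 (Fintype.card_pos_iff.1 (by simpa using hcard)),
      disjoint_empty_right _, hsum⟩
  obtain ⟨A, hAmono, hAcard, hAnorm⟩ :=
    exists_monotone_chain_norm_sum_le (Nat.cast_nonneg Δ) hv hsum
  rw [Module.finrank_fin_fun] at hAnorm
  set p : ℕ → Fin m → ℝ := fun k => ∑ i ∈ A k, v i
  -- prefixes `A k ⊆ A l` with equal `H` differ by a nonempty piece avoiding `F` whose sum is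
  -- `±(p l - p k)`; being integral with equal ceilings, `p l - p k` then vanishes
  set H : ℕ → ℕ × (Fin m → ℤ) := fun k => (#(A k ∩ F) % #F, fun j => ⌈p k j⌉)
  have hH : ∀ k ∈ Icc 1 T, H k ∈ range #F ×ˢ
      Fintype.piFinset fun _ : Fin m => Icc (-((m * Δ : ℕ) : ℤ)) (m * Δ : ℕ) := fun k _ =>
    mem_product.2 ⟨mem_range.2 (Nat.mod_lt _ (card_pos.2 hF)),
      ceil_mem_piFinset_Icc (by exact_mod_cast hAnorm k)⟩
  have hbox : #(range #F ×ˢ Fintype.piFinset fun _ : Fin m => Icc (-((m * Δ : ℕ) : ℤ)) (m * Δ : ℕ))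
      < #(Icc 1 T) := by
    rw [card_product, card_range, card_piFinset_Icc, Nat.card_Icc, Nat.add_sub_cancel, ← mul_assoc]
    exact hcard
  obtain ⟨k, hk, l, hl, hkl, hHkl⟩ := exists_ne_map_eq_of_card_lt_of_maps_to hbox hH
  wlog hlt : k < l generalizing k l
  · exact this l hl k hk hkl.symm hHkl.symm (by omega)
  simp only [H, Prod.mk.injEq, funext_iff] at hHkl
  obtain ⟨hmod, hceil⟩ := hHkl
  have hAk := hAcard k (mem_Icc.1 hk).2
  have hAl := hAcard l (mem_Icc.1 hl).2
  obtain ⟨B, hBne, hBF, hB⟩ : ∃ B : Finset κ, B.Nonempty ∧ Disjoint B F ∧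
      (∑ i ∈ B, v i = p l - p k ∨ ∑ i ∈ B, v i = p k - p l) :=
    exists_nonempty_disjoint_sum_eq_sub_or_sub v hsum (hAmono hlt.le)
      (card_pos.1 (by rw [hAk]; exact (mem_Icc.1 hk).1)) (by omega) hmod
  have hint' : p l - p k ∈ integerPoints (Fin m) := by
    have : ∑ i ∈ B, v i ∈ integerPoints (Fin m) :=
      sum_mem fun i hi => hint i (disjoint_left.1 hBF hi)
    rcases hB with h | h <;> rw [h] at this
    exacts [this, neg_sub (p k) (p l) ▸ neg_mem this]
  have hpkl := eq_of_sub_mem_integerPoints_of_ceil_eq hint' fun j => (hceil j).symm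
  refine ⟨B, hBne, hBF, ?_⟩
  rcases hB with h | h <;> rw [h, hpkl, sub_self]

end Pigeonhole

section Splitting

variable {κ E : Type*} [NormedAddCommGroup E] [NormedSpace ℝ E]

abbrev SplitIndex (u : κ → ℝ) (F : Finset κ) : Type _ := (Σ i, Fin ⌊u i⌋₊) ⊕ F

noncomputable def splitFamily (col : κ → E) (u : κ → ℝ) (F : Finset κ) : SplitIndex u F → E :=
  Sum.elim (fun σ => col σ.1) fun i => Int.fract (u i) • col i

variable {col : κ → E} {u : κ → ℝ} {F : Finset κ}

theorem norm_splitFamily_le {Δ : ℝ} (hcol : ∀ i, ‖col i‖ ≤ Δ) (x : SplitIndex u F) :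
    ‖splitFamily col u F x‖ ≤ Δ := by
  obtain σ | i := x
  · exact hcol σ.1
  · calc ‖Int.fract (u i) • col i‖ = Int.fract (u i) * ‖col i‖ := by
          rw [norm_smul, Real.norm_of_nonneg (Int.fract_nonneg _)]
      _ ≤ 1 * Δ := mul_le_mul (Int.fract_lt_one _).le (hcol i) (norm_nonneg _) zero_le_one
      _ = Δ := one_mul _

theorem sum_fract_le_card [Fintype κ] (hF : ∀ i ∉ F, ∃ k : ℕ, u i = k) :
    ∑ i, Int.fract (u i) ≤ #F := by
  rw [← sum_subset (subset_univ F) fun i _ hi => by obtain ⟨k, hk⟩ := hF i hi; simp [hk]]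
  simpa using sum_le_sum fun i (_ : i ∈ F) => (Int.fract_lt_one (u i)).le

theorem sum_splitFamily [Fintype κ] (hu : 0 ≤ u) (hF : ∀ i ∉ F, ∃ k : ℕ, u i = k) :
    ∑ x, splitFamily col u F x = ∑ i, u i • col i := by
  rw [Fintype.sum_sum_type, Fintype.sum_sigma]
  simp only [splitFamily, Sum.elim_inl, Sum.elim_inr, sum_const, card_univ, Fintype.card_fin]
  rw [sum_coe_sort F fun i => Int.fract (u i) • col i, sum_subset (subset_univ F)
    fun i _ hi => by obtain ⟨k, hk⟩ := hF i hi; simp [hk], ← sum_add_distrib]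
  refine sum_congr rfl fun i _ => ?_
  rw [← Nat.cast_smul_eq_nsmul ℝ, ← add_smul, natCast_floor_eq_intCast_floor (hu i),
    Int.floor_add_fract]

theorem sum_le_card_splitIndex [Fintype κ] (hu : 0 ≤ u) (hF : ∀ i ∉ F, ∃ k : ℕ, u i = k) :
    ∑ i, u i ≤ Fintype.card (SplitIndex u F) := by
  have hsplit : ∑ i, u i = ∑ i, (⌊u i⌋₊ : ℝ) + ∑ i, Int.fract (u i) := by
    rw [← sum_add_distrib]
    exact sum_congr rfl fun i _ => by
      rw [natCast_floor_eq_intCast_floor (hu i), Int.floor_add_fract]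
  simp only [Fintype.card_sum, Fintype.card_sigma, Fintype.card_fin, Fintype.card_coe]
  push_cast
  linarith [sum_fract_le_card hF]

end Splitting

section Conformal

theorem Finset.card_filter_fst_eq_le {κ : Type*} [DecidableEq κ] {β : κ → Type*}
    [∀ i, Fintype (β i)]
    (B : Finset (Σ i, β i)) (i : κ) : #{σ ∈ B | σ.1 = i} ≤ Fintype.card (β i) := by
  calc #{σ ∈ B | σ.1 = i} ≤ #(univ.map (Function.Embedding.sigmaMk (β := β) i)) :=
        card_le_card fun σ hσ => ?_
    _ = Fintype.card (β i) := by simp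
  obtain ⟨a, x⟩ := σ
  obtain rfl : a = i := (mem_filter.1 hσ).2
  exact mem_map_of_mem _ (mem_univ x)

variable {κ : Type*} [Fintype κ] [DecidableEq κ] {m Δ : ℕ}

theorem exists_nonempty_sum_eq_zero_of_sum_smul_eq_zero (col : κ → Fin m → ℝ)
    (hcol : ∀ i, ‖col i‖ ≤ Δ) (hint : ∀ i, col i ∈ integerPoints (Fin m)) (u : κ → ℝ)
    (hu : 0 ≤ u) (hsum : ∑ i, u i • col i = 0) (F : Finset κ) (hF : ∀ i ∉ F, ∃ k : ℕ, u i = k)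
    (hbig : #F * (2 * m * Δ + 1) ^ m < ∑ i, u i) :
    ∃ B : Finset (Σ i, Fin ⌊u i⌋₊), B.Nonempty ∧ ∑ σ ∈ B, col σ.1 = 0 := by
  set G : Finset (SplitIndex u F) := univ.map Function.Embedding.inr
  have hcard : #G * (2 * m * Δ + 1) ^ m < Fintype.card (SplitIndex u F) := by
    have : (#G : ℝ) = #F := by simp [G]
    exact_mod_cast this ▸ hbig.trans_le (sum_le_card_splitIndex hu hF)
  obtain ⟨B, hBne, hBG, hB⟩ := exists_nonempty_disjoint_sum_eq_zero (splitFamily col u F)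
    (norm_splitFamily_le hcol) (by rw [sum_splitFamily hu hF, hsum]) G
    (fun x hx => by
      obtain σ | i := x
      · exact hint σ.1
      · exact absurd (mem_map_of_mem _ (mem_univ i)) hx) hcard
  have hBright : B.toRight = ∅ := eq_empty_of_forall_notMem fun i hi =>
    disjoint_left.1 hBG (mem_toRight.1 hi) (mem_map_of_mem _ (mem_univ i))
  refine ⟨B.toLeft, ?_, ?_⟩
  · obtain ⟨σ | i, hx⟩ := hBne
    · exact ⟨σ, mem_toLeft.2 hx⟩
    · simpa [hBright] using mem_toRight.2 hx
  · simpa [sum_sum_eq_sum_toLeft_add_sum_toRight, hBright, splitFamily] using hB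

theorem exists_nat_le_mulVec_eq_zero (A : Matrix (Fin m) κ ℤ) (hA : ∀ j i, (A j i).natAbs ≤ Δ)
    (u : κ → ℝ) (hu : 0 ≤ u) (hAu : A.map (Int.cast : ℤ → ℝ) *ᵥ u = 0) (F : Finset κ)
    (hF : ∀ i ∉ F, ∃ k : ℕ, u i = k) (hbig : #F * (2 * m * Δ + 1) ^ m < ∑ i, u i) :
    ∃ c : κ → ℕ, c ≠ 0 ∧ A *ᵥ (fun i => (c i : ℤ)) = 0 ∧ ∀ i, (c i : ℝ) ≤ u i := by
  set col : κ → Fin m → ℝ := fun i j => A j i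
  have hcol : ∀ i, ‖col i‖ ≤ Δ := fun i =>
    (pi_norm_le_iff_of_nonneg (Nat.cast_nonneg Δ)).2 fun j => by
      simpa [col, Nat.cast_natAbs, Int.cast_abs] using (Nat.cast_le (α := ℝ)).2 (hA j i)
  have hsum : ∑ i, u i • col i = 0 := by
    rw [← hAu]
    ext j
    simp [col, Matrix.mulVec, dotProduct, mul_comm]
  obtain ⟨B, hBne, hB⟩ := exists_nonempty_sum_eq_zero_of_sum_smul_eq_zero col hcol
    (fun i => mem_integerPoints.2 fun j => ⟨A j i, rfl⟩) u hu hsum F hF hbig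
  set c : κ → ℕ := fun i => #{σ ∈ B | σ.1 = i}
  have hcsum : ∑ i, (c i : ℝ) • col i = 0 := by
    rw [← hB, ← sum_fiberwise' B (·.1) col]
    simp only [sum_const, c, Nat.cast_smul_eq_nsmul]
  refine ⟨c, fun h => ?_, ?_, fun i => ?_⟩
  · obtain ⟨σ, hσ⟩ := hBne
    have hσ' : σ ∈ {τ ∈ B | τ.1 = σ.1} := mem_filter.2 ⟨hσ, rfl⟩
    exact (card_pos.2 ⟨σ, hσ'⟩).ne' (congrFun h σ.1)
  · ext j
    have := congrFun hcsum j
    simp only [Finset.sum_apply, Pi.smul_apply, smul_eq_mul, col, Pi.zero_apply] at this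
    simp only [Matrix.mulVec, dotProduct, Pi.zero_apply]
    rw [← Int.cast_inj (α := ℝ)]
    push_cast
    simpa [mul_comm] using this
  · calc (c i : ℝ) ≤ ⌊u i⌋₊ := by
          exact_mod_cast (by simpa using B.card_filter_fst_eq_le i : c i ≤ ⌊u i⌋₊)
      _ ≤ u i := Nat.floor_le (hu i)

theorem exists_int_eq_one_or_eq_neg_one_mul_abs (a : ℝ) :
    ∃ s : ℤ, (s = 1 ∨ s = -1) ∧ (s : ℝ) * |a| = a := by
  rcases le_or_gt 0 a with h | h
  · exact ⟨1, .inl rfl, by simp [abs_of_nonneg h]⟩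
  · exact ⟨-1, .inr rfl, by simp [abs_of_neg h]⟩

theorem exists_int_conformal_mulVec_eq_zero (A : Matrix (Fin m) κ ℤ)
    (hA : ∀ j i, (A j i).natAbs ≤ Δ) (u : κ → ℝ) (hAu : A.map (Int.cast : ℤ → ℝ) *ᵥ u = 0)
    (F : Finset κ) (hF : ∀ i ∉ F, ∃ k : ℤ, u i = k)
    (hbig : #F * (2 * m * Δ + 1) ^ m < ∑ i, |u i|) :
    ∃ c : κ → ℤ, c ≠ 0 ∧ A *ᵥ c = 0 ∧ ∀ i, 0 ≤ (c i : ℝ) * (u i - c i) := by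
  -- flipping the signs of the columns reduces to the case `0 ≤ u`
  choose s hs hsu using fun i => exists_int_eq_one_or_eq_neg_one_mul_abs (u i)
  have hss : ∀ i, s i * s i = 1 := fun i => by rcases hs i with h | h <;> simp [h]
  set A' : Matrix (Fin m) κ ℤ := Matrix.of fun j i => A j i * s i
  have hA's : ∀ (w : κ → ℤ), A' *ᵥ w = A *ᵥ fun i => s i * w i := fun w => by
    ext j
    simp [A', Matrix.mulVec, dotProduct, mul_assoc]
  obtain ⟨c, hc0, hAc, hcu⟩ := exists_nat_le_mulVec_eq_zero A'
    (fun j i => by rcases hs i with h | h <;> simpa [A', h] using hA j i)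
    (fun i => |u i|) (fun i => abs_nonneg _)
    (by
      rw [← hAu]
      ext j
      simp [A', Matrix.mulVec, dotProduct, mul_assoc, hsu])
    F (fun i hi => by
      obtain ⟨k, hk⟩ := hF i hi
      exact ⟨k.natAbs, by simp [hk, Nat.cast_natAbs]⟩) hbig
  refine ⟨fun i => s i * c i, fun h => hc0 ?_, by rw [← hA's, hAc], fun i => ?_⟩
  · ext i
    have := congrFun h i
    simp only [Pi.zero_apply, mul_eq_zero, Nat.cast_eq_zero] at this
    exact this.resolve_left fun h0 => by simpa [h0] using hss i
  · have key : (s i * c i : ℝ) * (u i - s i * c i) = (s i * s i : ℤ) * (c i * (|u i| - c i)) := by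
      conv_lhs => rw [← hsu i]
      push_cast
      ring
    push_cast
    rw [key, hss i, Int.cast_one, one_mul]
    exact mul_nonneg (Nat.cast_nonneg _) (sub_nonneg.2 (hcu i))

end Conformal

section ZeroOne

variable {m n Δ : ℕ}

theorem exists_conformal_mulVec (W : Matrix (Fin m) (Fin n) ℤ) (hW : ∀ j i, (W j i).natAbs ≤ Δ)
    (hΔ : 1 ≤ Δ) (d : Fin n → ℝ) (F : Finset (Fin n)) (hF : ∀ i ∉ F, ∃ k : ℤ, d i = k)
    (hbig : (#F + m) * (2 * m * Δ + 1) ^ m < ∑ i, |d i|) :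
    ∃ c : Fin n → ℤ, c ≠ 0 ∧ (∀ i, 0 ≤ (c i : ℝ) * (d i - c i)) ∧
      ∀ j, 0 ≤ ((W *ᵥ c) j : ℝ) * ((W.map (Int.cast : ℤ → ℝ) *ᵥ d) j - (W *ᵥ c) j) := by
  set W' := W.map (Int.cast : ℤ → ℝ)
  -- standard form: `(d, W d)` lies in the kernel of `[W | -1]`
  set A : Matrix (Fin m) (Fin n ⊕ Fin m) ℤ := Matrix.fromCols W (-1)
  set u : Fin n ⊕ Fin m → ℝ := Sum.elim d (W' *ᵥ d)
  have hA : ∀ j i, (A j i).natAbs ≤ Δ := by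
    rintro j (i | i)
    · exact hW j i
    · by_cases h : j = i <;> simp [A, h, hΔ]
  have hAu : A.map (Int.cast : ℤ → ℝ) *ᵥ u = 0 := by
    rw [Matrix.fromCols_map, Matrix.fromCols_mulVec_sumElim, Matrix.map_neg _ Int.cast_neg,
      Matrix.map_one _ Int.cast_zero Int.cast_one, Matrix.neg_mulVec, Matrix.one_mulVec,
      add_neg_cancel]
  have hu : ∀ i ∉ F.disjSum (univ : Finset (Fin m)), ∃ k : ℤ, u i = k := by
    rintro (i | j) hi
    · exact hF i (by simpa using hi)
    · simp at hi
  have hbig' : #(F.disjSum (univ : Finset (Fin m))) * (2 * m * Δ + 1) ^ m < ∑ i, |u i| := by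
    calc ((#(F.disjSum (univ : Finset (Fin m))) : ℕ) : ℝ) * (2 * m * Δ + 1) ^ m
        = (#F + m) * (2 * m * Δ + 1) ^ m := by simp
      _ < ∑ i, |d i| := hbig
      _ ≤ ∑ i, |u i| := by
        rw [Fintype.sum_sum_type]
        simpa [u] using sum_nonneg fun j (_ : j ∈ univ) => abs_nonneg ((W' *ᵥ d) j)
  obtain ⟨c, hc0, hAc, hconf⟩ := exists_int_conformal_mulVec_eq_zero A hA u hAu _ hu hbig'
  have hcy : W *ᵥ (c ∘ Sum.inl) = c ∘ Sum.inr := by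
    rwa [Matrix.fromCols_mulVec, Matrix.neg_mulVec, Matrix.one_mulVec, add_neg_eq_zero] at hAc
  refine ⟨c ∘ Sum.inl, fun h => hc0 ?_, fun i => hconf (.inl i), fun j => ?_⟩
  · ext (i | j)
    · exact congrFun h i
    · change (c ∘ Sum.inr) j = 0
      rw [← hcy, h, Matrix.mulVec_zero, Pi.zero_apply]
  · simpa [hcy, u] using hconf (.inr j)

theorem int_eq_zero_or_eq_sub_of_conformal {x z : ℝ} (hx : x ∈ Set.Icc (0 : ℝ) 1)
    (hz : z = 0 ∨ z = 1) {k : ℤ} (hk : 0 ≤ (k : ℝ) * (z - x - k)) :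
    k = 0 ∨ ((k : ℝ) = z - x ∧ (x = 0 ∨ x = 1)) := by
  have hz₀ : 0 ≤ z := by rcases hz with rfl | rfl <;> norm_num
  have hz₁ : z ≤ 1 := by rcases hz with rfl | rfl <;> norm_num
  obtain ⟨hx₀, hx₁⟩ := hx
  rcases lt_trichotomy k 0 with h | h | h
  · have hk₁ : (k : ℝ) ≤ -1 := by exact_mod_cast (show k ≤ -1 by omega)
    have : z - x - k ≤ 0 := by nlinarith
    exact .inr ⟨by linarith, .inr (by linarith)⟩
  · exact .inl h
  · have hk₁ : (1 : ℝ) ≤ k := by exact_mod_cast (show 1 ≤ k by omega)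
    have : 0 ≤ z - x - k := by nlinarith
    exact .inr ⟨by linarith, .inl (by linarith)⟩

theorem sub_int_mem_zero_one_of_conformal {x z : ℝ} (hx : x ∈ Set.Icc (0 : ℝ) 1)
    (hz : z = 0 ∨ z = 1) {k : ℤ} (hk : 0 ≤ (k : ℝ) * (z - x - k)) :
    (z - k = 0 ∨ z - k = 1) ∧ x + k ∈ Set.Icc (0 : ℝ) 1 ∧ |x - (z - k)| = |x - z| - |(k : ℝ)| := by
  rcases int_eq_zero_or_eq_sub_of_conformal hx hz hk with rfl | ⟨hkzx, hx01⟩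
  · simpa using ⟨hz, hx⟩
  · rw [hkzx, sub_sub_cancel, add_sub_cancel, sub_self, abs_zero, abs_sub_comm, sub_self]
    exact ⟨hx01, by rcases hz with h | h <;> simp [h]⟩

theorem exists_closer_of_lt_sum_abs_sub (W : Matrix (Fin m) (Fin n) ℤ)
    (hW : ∀ j i, (W j i).natAbs ≤ Δ) (hΔ : 1 ≤ Δ) {g : Fin m → ℝ → ℝ}
    (hg : ∀ j, ConvexOn ℝ Set.univ (g j)) {f : (Fin n → ℝ) → ℝ}
    (hf : ∀ y, f y = ∑ j, g j ((W.map (Int.cast : ℤ → ℝ) *ᵥ y) j)) {x z : Fin n → ℝ}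
    (hx : ∀ i, x i ∈ Set.Icc (0 : ℝ) 1)
    (hmin : ∀ y : Fin n → ℝ, (∀ i, y i ∈ Set.Icc (0 : ℝ) 1) → f x ≤ f y)
    (hfrac : #(fracSupport x) ≤ m) (hz : ∀ i, z i = 0 ∨ z i = 1)
    (hfar : 2 * m * (2 * m * Δ + 1) ^ m < ∑ i, |x i - z i|) :
    ∃ z' : Fin n → ℝ, (∀ i, z' i = 0 ∨ z' i = 1) ∧ f z' ≤ f z ∧
      ∑ i, |x i - z' i| < ∑ i, |x i - z i| := by
  set W' := W.map (Int.cast : ℤ → ℝ)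
  obtain ⟨c, hc0, hconfx, hconfy⟩ := exists_conformal_mulVec W hW hΔ (z - x) (fracSupport x)
    (fun i hi => by
      have hxi : x i = 0 ∨ x i = 1 := by rw [mem_fracSupport] at hi; tauto
      rw [Pi.sub_apply]
      rcases hxi with h | h <;> rcases hz i with h' | h' <;> rw [h, h']
      exacts [⟨0, by simp⟩, ⟨1, by simp⟩, ⟨-1, by simp⟩, ⟨0, by simp⟩])
    (by
      calc ((#(fracSupport x) + m : ℝ)) * (2 * m * Δ + 1) ^ m ≤ 2 * m * (2 * m * Δ + 1) ^ m := by
            gcongr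
            have : (#(fracSupport x) : ℝ) ≤ m := by exact_mod_cast hfrac
            linarith
        _ < ∑ i, |x i - z i| := hfar
        _ = ∑ i, |(z - x) i| := sum_congr rfl fun i _ => abs_sub_comm _ _)
  set c' : Fin n → ℝ := fun i => c i
  have hround := fun i => sub_int_mem_zero_one_of_conformal (hx i) (hz i) (hconfx i)
  have hWc : ∀ j, (W' *ᵥ c') j = (W *ᵥ c) j := fun j =>
    (RingHom.map_mulVec (Int.castRingHom ℝ) W c j).symm
  refine ⟨z - c', fun i => (hround i).1, ?_, ?_⟩
  · have hexch := sum_map_mulVec_add_add_le hg W' x z c' fun j => by simpa [hWc] using hconfy j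
    have hxc := hmin (x + c') fun i => (hround i).2.1
    rw [hf, hf] at hxc ⊢
    linarith
  · obtain ⟨i, hi⟩ := Function.ne_iff.1 hc0
    have hpos : 0 < ∑ i, |c' i| :=
      sum_pos' (fun i _ => abs_nonneg _) ⟨i, mem_univ i, abs_pos.2 (by simpa [c'] using hi)⟩
    have hdist : ∀ i, |x i - (z - c') i| = |x i - z i| - |c' i| := fun i => (hround i).2.2
    simp only [hdist, sum_sub_distrib]
    linarith

theorem exists_minimizer_min_sum_abs_sub {ι : Type*} [Fintype ι] (f : (ι → ℝ) → ℝ)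
    (x : ι → ℝ) :
    ∃ z : ι → ℝ, (∀ i, z i = 0 ∨ z i = 1) ∧ (∀ y : ι → ℝ, (∀ i, y i = 0 ∨ y i = 1) → f z ≤ f y) ∧
      ∀ y : ι → ℝ, (∀ i, y i = 0 ∨ y i = 1) → f y ≤ f z →
        ∑ i, |x i - z i| ≤ ∑ i, |x i - y i| := by
  classical
  set P : Finset (ι → ℝ) := Fintype.piFinset fun _ => {0, 1}
  have hP : ∀ y, y ∈ P ↔ ∀ i, y i = 0 ∨ y i = 1 := by simp [P]
  obtain ⟨z₀, hz₀, hmin₀⟩ := P.exists_min_image f ⟨0, (hP 0).2 fun _ => .inl rfl⟩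
  obtain ⟨z, hz, hzmin⟩ := {y ∈ P | f y ≤ f z₀}.exists_min_image (fun y => ∑ i, |x i - y i|)
    ⟨z₀, mem_filter.2 ⟨hz₀, le_rfl⟩⟩
  obtain ⟨hzP, hfz⟩ := mem_filter.1 hz
  exact ⟨z, (hP z).1 hzP, fun y hy => hfz.trans (hmin₀ y ((hP y).2 hy)),
    fun y hy hyz => hzmin y (mem_filter.2 ⟨(hP y).2 hy, hyz.trans hfz⟩)⟩

theorem exists_zero_one_sum_abs_sub_le {ι : Type*} [Fintype ι] {x : ι → ℝ}
    (hx : ∀ i, x i ∈ Set.Icc (0 : ℝ) 1) :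
    ∃ y : ι → ℝ, (∀ i, y i = 0 ∨ y i = 1) ∧ ∑ i, |x i - y i| ≤ #(fracSupport x) := by
  refine ⟨fun i => if x i = 1 then 1 else 0, fun i => by dsimp only; split_ifs <;> simp, ?_⟩
  have hzero : ∀ i ∉ fracSupport x, |x i - if x i = 1 then 1 else 0| = 0 := fun i hi => by
    rw [mem_fracSupport, not_and_or, not_not, not_not] at hi
    rcases hi with h | h <;> simp [h]
  rw [← sum_subset (subset_univ _) fun i _ hi => hzero i hi, card_eq_sum_ones, Nat.cast_sum]
  refine sum_le_sum fun i hi => ?_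
  rw [mem_fracSupport] at hi
  rw [if_neg hi.2, sub_zero, abs_of_nonneg (hx i).1, Nat.cast_one]
  exact (hx i).2

end ZeroOne

/-- Proximity for separable convex functions:
δ ≤ 2m(2m‖W‖_∞ + 1)^m. -/
theorem stmt12 (m n : ℕ) (W : Matrix (Fin m) (Fin n) ℤ) (g : Fin m → ℝ → ℝ)
    (hconv : ∀ i, ConvexOn ℝ Set.univ (g i))
    (f : (Fin n → ℝ) → ℝ)
    (hf : f = fun x => ∑ i, g i (((W.map (fun a => (a:ℝ))).mulVec x) i))
    (xs : Fin n → ℝ) (hxs : ∀ i, xs i ∈ Set.Icc (0:ℝ) 1)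
    (hmin : ∀ y : Fin n → ℝ, (∀ i, y i ∈ Set.Icc (0:ℝ) 1) → f xs ≤ f y)
    (hfrac : Set.ncard {i | xs i ≠ 0 ∧ xs i ≠ 1} ≤ m) :
    ∃ zs : Fin n → ℝ, (∀ i, zs i = 0 ∨ zs i = 1) ∧
      (∀ y : Fin n → ℝ, (∀ i, y i = 0 ∨ y i = 1) → f zs ≤ f y) ∧
      ∑ i, |xs i - zs i| ≤
        2 * m * (2 * m * ((Finset.univ.sup (fun p : Fin m × Fin n => (W p.1 p.2).natAbs) : ℕ) : ℝ) + 1) ^ m := by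
  set Δ := univ.sup fun p : Fin m × Fin n => (W p.1 p.2).natAbs
  have hW : ∀ j i, (W j i).natAbs ≤ Δ := fun j i =>
    le_sup (f := fun p : Fin m × Fin n => (W p.1 p.2).natAbs) (mem_univ (j, i))
  have hfrac' : #(fracSupport xs) ≤ m := by
    have : (fracSupport xs : Set (Fin n)) = {i | xs i ≠ 0 ∧ xs i ≠ 1} := by ext; simp
    rwa [← Set.ncard_coe_finset, this]
  obtain ⟨z, hz, hzmin, hzclose⟩ := exists_minimizer_min_sum_abs_sub f xs
  refine ⟨z, hz, hzmin, ?_⟩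
  rcases Nat.eq_zero_or_pos Δ with hΔ | hΔ
  · -- the columns of `-1` in the standard form need `1 ≤ Δ`; here `W = 0`, so every 0/1 point
    -- is a minimizer, in particular a rounding of `xs`
    have hW0 : W.map (fun a => (a : ℝ)) = 0 := by
      ext j i
      simpa [hΔ] using hW j i
    obtain ⟨y, hy, hdist⟩ := exists_zero_one_sum_abs_sub_le hxs
    calc ∑ i, |xs i - z i| ≤ ∑ i, |xs i - y i| := hzclose y hy (by simp [hf, hW0])
      _ ≤ m := hdist.trans (by exact_mod_cast hfrac')
      _ ≤ _ := by simp [hΔ, two_mul]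
  · by_contra! hfar
    obtain ⟨z', hz', hfz', hcloser⟩ := exists_closer_of_lt_sum_abs_sub W hW hΔ hconv
      (fun y => by rw [hf]) hxs hmin hfrac' hz hfar
    exact (hzclose z' hz' hfz').not_gt hcloser
end

section
/- Let W ∈ ℤ^{m×n}, g: ℝ^m → ℝ convex with L-Lipschitz continuous gradients (‖∇g(u) − ∇g(v)‖_∞ ≤ L‖u−v‖₁), and let x* ∈ [0,1]^n minimize g(Wx) over [0,1]^n with at most m fractional entries. Then g(W⌈x*⌋) − g(Wx*) ≤ (L/4)·m⁴·‖W‖_∞², where ⌈x*⌋ denotes coordinate-wise rounding of x* to the nearest integer. -/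
/-!
The rounding direction `d = ⌈x*⌋ - x*` only moves the fractional coordinates of `x*`, which lie in
the interior of `[0,1]`, so `x* + t d` stays feasible for small `|t|` and first-order optimality gives
`∇g(Wx*) · Wd = 0`. Convexity bounds `g(Wx* + Wd) - g(Wx*)` by `∇g(Wx* + Wd) · Wd`, which therefore
equals `(∇g(Wx* + Wd) - ∇g(Wx*)) · Wd ≤ L ‖Wd‖₁²`. Finally `‖Wd‖₁ ≤ m ‖W‖_∞ ‖d‖₁ ≤ m ‖W‖_∞ · m/2`,
as `d` has at most `m` nonzero entries, each of size at most `1/2`.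
-/

open Finset Filter Topology Matrix

theorem ConvexOn.sub_le_fderiv_apply_sub {E : Type*} [NormedAddCommGroup E] [NormedSpace ℝ E]
    {s : Set E} {g : E → ℝ} (hg : ConvexOn ℝ s g) {v w : E} (hv : v ∈ s) (hw : w ∈ s)
    (hdiff : DifferentiableAt ℝ g w) : g w - g v ≤ fderiv ℝ g w (w - v) := by
  set ℓ : ℝ →ᵃ[ℝ] E := AffineMap.lineMap v w
  have hline : ConvexOn ℝ (ℓ ⁻¹' s) (g ∘ ℓ) := hg.comp_affineMap ℓ
  have hderiv : HasDerivAt (g ∘ ℓ) (fderiv ℝ g w (w - v)) 1 :=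
    hdiff.hasFDerivAt.comp_hasDerivAt_of_eq 1 AffineMap.hasDerivAt_lineMap (by simp [ℓ])
  simpa [ℓ, slope_def_field] using
    hline.slope_le_of_hasDerivAt (x := 0) (by simpa [ℓ]) (by simpa [ℓ]) one_pos hderiv

theorem IsLocalMin.fderiv_apply_eq_zero_of_line {E : Type*} [NormedAddCommGroup E]
    [NormedSpace ℝ E] {f : E → ℝ} {a u : E} (hmin : IsLocalMin (fun t : ℝ => f (a + t • u)) 0)
    (hf : DifferentiableAt ℝ f a) : fderiv ℝ f a u = 0 := by
  have hline : HasDerivAt (fun t : ℝ => a + t • u) u 0 := by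
    simpa using ((hasDerivAt_id (0 : ℝ)).smul_const u).const_add a
  exact hmin.hasDerivAt_eq_zero (hf.hasFDerivAt.comp_hasDerivAt_of_eq 0 hline (by simp))

theorem eventually_forall_add_mul_mem_Icc {ι : Type*} [Finite ι] {a b : ℝ} {x d : ι → ℝ}
    (hx : ∀ i, x i ∈ Set.Icc a b) (hd : ∀ i, x i = a ∨ x i = b → d i = 0) :
    ∀ᶠ t in 𝓝 (0 : ℝ), ∀ i, x i + t * d i ∈ Set.Icc a b := by
  refine eventually_all.2 fun i => ?_
  by_cases hend : x i = a ∨ x i = b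
  · simp [hd i hend, hx i]
  · push Not at hend
    have hint : x i ∈ Set.Ioo a b :=
      ⟨(hx i).1.lt_of_ne' hend.1, (hx i).2.lt_of_ne hend.2⟩
    have hcont : Continuous fun t : ℝ => x i + t * d i := by fun_prop
    filter_upwards [hcont.continuousAt.eventually_mem (isOpen_Ioo.mem_nhds (by simpa using hint))]
      with t ht
    exact Set.Ioo_subset_Icc_self ht

theorem fderiv_mulVec_apply_eq_zero_of_isMinOn {ι κ : Type*} [Fintype ι] [Fintype κ]
    (A : Matrix ι κ ℝ) {g : (ι → ℝ) → ℝ} {a b : ℝ} {x d : κ → ℝ}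
    (hg : DifferentiableAt ℝ g (A *ᵥ x)) (hx : ∀ i, x i ∈ Set.Icc a b)
    (hmin : IsMinOn (fun y => g (A *ᵥ y)) {y | ∀ i, y i ∈ Set.Icc a b} x)
    (hd : ∀ i, x i = a ∨ x i = b → d i = 0) :
    fderiv ℝ g (A *ᵥ x) (A *ᵥ d) = 0 := by
  refine IsLocalMin.fderiv_apply_eq_zero_of_line ?_ hg
  filter_upwards [eventually_forall_add_mul_mem_Icc hx hd] with t ht
  simpa [mulVec_add, mulVec_smul] using hmin (show x + t • d ∈ _ by simpa using ht)

theorem abs_apply_le_mul_sum_abs {ι : Type*} [Fintype ι] [DecidableEq ι]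
    (T : (ι → ℝ) →L[ℝ] ℝ) {K : ℝ} (hT : ∀ j, |T (Pi.single j 1)| ≤ K) (h : ι → ℝ) :
    |T h| ≤ K * ∑ j, |h j| := by
  have hexpand : T h = ∑ j, h j * T (Pi.single j 1) := by
    conv_lhs => rw [← Finset.univ_sum_single h, map_sum]
    refine Finset.sum_congr rfl fun j _ => ?_
    rw [← smul_eq_mul, ← map_smul, ← Pi.single_smul', smul_eq_mul, mul_one]
  calc |T h| ≤ ∑ j, |h j| * |T (Pi.single j 1)| := by
        rw [hexpand]
        simpa only [abs_mul] using abs_sum_le_sum_abs (fun j => h j * T (Pi.single j 1)) univ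
    _ ≤ ∑ j, |h j| * K := by gcongr with j; exact hT j
    _ = K * ∑ j, |h j| := by rw [← Finset.sum_mul, mul_comm]

theorem ConvexOn.sub_le_of_fderiv_apply_eq_zero {ι : Type*} [Fintype ι] [DecidableEq ι]
    {s : Set (ι → ℝ)} {g : (ι → ℝ) → ℝ} (hg : ConvexOn ℝ s g) {v w : ι → ℝ} (hv : v ∈ s)
    (hw : w ∈ s) (hdiff : DifferentiableAt ℝ g w) {L : ℝ}
    (hLip : ∀ j, |fderiv ℝ g w (Pi.single j 1) - fderiv ℝ g v (Pi.single j 1)| ≤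
      L * ∑ i, |w i - v i|)
    (hopt : fderiv ℝ g v (w - v) = 0) :
    g w - g v ≤ L * (∑ i, |w i - v i|) ^ 2 := by
  calc g w - g v ≤ fderiv ℝ g w (w - v) := hg.sub_le_fderiv_apply_sub hv hw hdiff
    _ = (fderiv ℝ g w - fderiv ℝ g v) (w - v) := by simp [hopt]
    _ ≤ (L * ∑ i, |w i - v i|) * ∑ i, |(w - v) i| :=
        (le_abs_self _).trans (abs_apply_le_mul_sum_abs _ hLip _)
    _ = L * (∑ i, |w i - v i|) ^ 2 := by simp only [Pi.sub_apply]; ring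

theorem Matrix.sum_abs_mulVec_le {ι κ : Type*} [Fintype ι] [Fintype κ] (A : Matrix ι κ ℝ)
    {B : ℝ} (hA : ∀ i j, |A i j| ≤ B) (x : κ → ℝ) :
    ∑ i, |(A *ᵥ x) i| ≤ Fintype.card ι * (B * ∑ j, |x j|) := by
  have hrow : ∀ i, |(A *ᵥ x) i| ≤ B * ∑ j, |x j| := fun i =>
    calc |(A *ᵥ x) i| ≤ ∑ j, |A i j| * |x j| := by
          simpa only [mulVec, dotProduct, abs_mul] using
            abs_sum_le_sum_abs (fun j => A i j * x j) univ
      _ ≤ ∑ j, B * |x j| := by gcongr with j; exact hA i j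
      _ = B * ∑ j, |x j| := (Finset.mul_sum _ _ _).symm
  calc ∑ i, |(A *ᵥ x) i| ≤ #(univ : Finset ι) • (B * ∑ j, |x j|) :=
        Finset.sum_le_card_nsmul _ _ _ fun i _ => hrow i
    _ = Fintype.card ι * (B * ∑ j, |x j|) := by rw [card_univ, nsmul_eq_mul]

theorem sum_abs_round_sub_le {ι : Type*} [Fintype ι] (x : ι → ℝ) :
    ∑ i, |(round (x i) : ℝ) - x i| ≤ {i | x i ≠ 0 ∧ x i ≠ 1}.ncard / 2 := by
  classical
  set s := univ.filter fun i => x i ≠ 0 ∧ x i ≠ 1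
  have hs : {i | x i ≠ 0 ∧ x i ≠ 1}.ncard = #s := by
    rw [← Set.ncard_coe_finset]; congr 1; ext; simp [s]
  calc ∑ i, |(round (x i) : ℝ) - x i| = ∑ i ∈ s, |(round (x i) : ℝ) - x i| := by
        refine (Finset.sum_subset (subset_univ s) fun i _ hi => ?_).symm
        have hint : x i = 0 ∨ x i = 1 := by simpa [s, or_iff_not_imp_left] using hi
        rcases hint with h | h <;> simp [h]
    _ ≤ #s • (1 / 2 : ℝ) := Finset.sum_le_card_nsmul _ _ _ fun i _ => by
        simpa only [abs_sub_comm] using abs_sub_round (x i)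
    _ = {i | x i ≠ 0 ∧ x i ≠ 1}.ncard / 2 := by rw [hs, nsmul_eq_mul]; ring

theorem Matrix.abs_intCast_le_sup_natAbs {ι κ : Type*} [Fintype ι] [Fintype κ]
    (W : Matrix ι κ ℤ) (i : ι) (j : κ) :
    |(W i j : ℝ)| ≤ ((univ.sup fun p : ι × κ => (W p.1 p.2).natAbs : ℕ) : ℝ) := by
  rw [← Int.cast_abs, Int.abs_eq_natAbs, Int.cast_natCast]
  exact_mod_cast Finset.le_sup (f := fun p : ι × κ => (W p.1 p.2).natAbs) (mem_univ (i, j))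

/-- Rounding gap bound: g(W⌈x*⌋) − g(Wx*) ≤ (L/4)m⁴‖W‖_∞². -/
theorem stmt14 (m n : ℕ) (W : Matrix (Fin m) (Fin n) ℤ) (g : (Fin m → ℝ) → ℝ)
    (L : ℝ) (hL : 0 < L)
    (hconv : ConvexOn ℝ Set.univ g) (hdiff : Differentiable ℝ g)
    (hLip : ∀ u v : Fin m → ℝ, ∀ j : Fin m,
      |fderiv ℝ g u (Pi.single j 1) - fderiv ℝ g v (Pi.single j 1)| ≤ L * ∑ i, |u i - v i|)
    (xs : Fin n → ℝ) (hxs : ∀ i, xs i ∈ Set.Icc (0:ℝ) 1)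
    (hmin : ∀ y : Fin n → ℝ, (∀ i, y i ∈ Set.Icc (0:ℝ) 1) →
      g ((W.map (fun a => (a:ℝ))).mulVec xs) ≤ g ((W.map (fun a => (a:ℝ))).mulVec y))
    (hfrac : Set.ncard {i | xs i ≠ 0 ∧ xs i ≠ 1} ≤ m) :
    g ((W.map (fun a => (a:ℝ))).mulVec (fun i => (round (xs i) : ℝ))) -
      g ((W.map (fun a => (a:ℝ))).mulVec xs) ≤
    L / 4 * (m:ℝ) ^ 4 *
      ((Finset.univ.sup (fun p : Fin m × Fin n => (W p.1 p.2).natAbs) : ℕ) : ℝ) ^ 2 := by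
  set A := W.map (fun a => (a : ℝ))
  set B := ((univ.sup fun p : Fin m × Fin n => (W p.1 p.2).natAbs : ℕ) : ℝ)
  set r : Fin n → ℝ := fun i => (round (xs i) : ℝ)
  have hopt : fderiv ℝ g (A *ᵥ xs) (A *ᵥ r - A *ᵥ xs) = 0 := by
    rw [← mulVec_sub]
    refine fderiv_mulVec_apply_eq_zero_of_isMinOn A (hdiff _) hxs (isMinOn_iff.2 hmin) ?_
    rintro i (h | h) <;> simp [r, h]
  have hdist : ∑ j, |(A *ᵥ r) j - (A *ᵥ xs) j| ≤ m * (B * (m / 2)) :=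
    calc ∑ j, |(A *ᵥ r) j - (A *ᵥ xs) j| = ∑ j, |(A *ᵥ (r - xs)) j| := by simp [mulVec_sub]
      _ ≤ m * (B * ∑ i, |r i - xs i|) := by
        simpa using A.sum_abs_mulVec_le (W.abs_intCast_le_sup_natAbs) (r - xs)
      _ ≤ m * (B * (m / 2)) := by
        gcongr
        exact (sum_abs_round_sub_le xs).trans (by gcongr)
  calc _ ≤ L * (∑ j, |(A *ᵥ r) j - (A *ᵥ xs) j|) ^ 2 :=
        hconv.sub_le_of_fderiv_apply_eq_zero trivial trivial (hdiff _) (hLip _ _) hopt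
    _ ≤ L * (m * (B * (m / 2))) ^ 2 := by gcongr
    _ = L / 4 * (m : ℝ) ^ 4 * B ^ 2 := by ring
end
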